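/- arXiv:2308.00556 — 5 statements merged into one kernel-verified Lean document; each statement's English description precedes it below -/
import Mathlib

section
/- Let P be a probability distribution on ℝ^d × ℝ, ‖·‖ a norm on ℝ^d with dual norm ‖·‖_*, w ∈ ℝ^d and r ≥ 0. If the standard risk E(w) := E_{(x,y)∼P}(⟨w, x⟩ − y)² is finite, then the adversarial risk E(w, r) := E_{(x,y)∼P} sup_{‖δ‖ ≤ r}(⟨w, x + δ⟩ − y)² satisfies E(w, r) ≥ E(w) + r²‖w‖_*². -/
open Finset MeasureTheory

/-- The adversarial squared loss of the linear predictor `f_w(x) = ⟨w, x⟩` at `(x, y)`,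
for attacks in the `N`-ball of radius `r`. -/
noncomputable def advLoss {d : ℕ} (N : (Fin d → ℝ) → ℝ) (r : ℝ)
    (w : Fin d → ℝ) (x : Fin d → ℝ) (y : ℝ) : ℝ :=
  sSup {e : ℝ | ∃ δ : Fin d → ℝ, N δ ≤ r ∧ e = (∑ j, w j * (x j + δ j) - y) ^ 2}

/-- The dual norm `N*(w) = sup {⟨u, w⟩ : N u ≤ 1}`. -/
noncomputable def dualNorm {d : ℕ} (N : (Fin d → ℝ) → ℝ) (w : Fin d → ℝ) : ℝ :=
  sSup {t : ℝ | ∃ u : Fin d → ℝ, N u ≤ 1 ∧ t = ∑ j, u j * w j}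

/-- For a probability distribution `P` on `ℝ^d × ℝ`, a norm `N` on `ℝ^d`
with dual norm `N*`, `w ∈ ℝ^d` and `r ≥ 0`: if the standard risk
`E(w) = E (⟨w, x⟩ − y)²` is finite, then the adversarial risk
`E(w, r) = E sup_{N δ ≤ r} (⟨w, x + δ⟩ − y)²` satisfies
`E(w, r) ≥ E(w) + r² (N*(w))²`. -/
theorem adversarial_risk_lower_bound
    {d : ℕ} (P : Measure ((Fin d → ℝ) × ℝ)) [IsProbabilityMeasure P]
    (N : (Fin d → ℝ) → ℝ)
    (hN_def : ∀ v : Fin d → ℝ, N v = 0 ↔ v = 0)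
    (hN_smul : ∀ (a : ℝ) (v : Fin d → ℝ), N (a • v) = |a| * N v)
    (hN_add : ∀ u v : Fin d → ℝ, N (u + v) ≤ N u + N v)
    (w : Fin d → ℝ) (r : ℝ) (hr : 0 ≤ r)
    (hint : Integrable (fun p : (Fin d → ℝ) × ℝ => (∑ j, w j * p.1 j - p.2) ^ 2) P) :
    ∫ p, advLoss N r w p.1 p.2 ∂P ≥
      (∫ p, (∑ j, w j * p.1 j - p.2) ^ 2 ∂P) + r ^ 2 * (dualNorm N w) ^ 2 := by
  -- Basic properties of the norm `N`
  have hN0 : N 0 = 0 := (hN_def 0).mpr rfl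
  have hNneg : ∀ v, N (-v) = N v := fun v => by
    have := hN_smul (-1) v; simpa using this
  have hNnonneg : ∀ v, 0 ≤ N v := fun v => by
    have h := hN_add v (-v)
    rw [add_neg_cancel, hN0, hNneg] at h; linarith
  have hNsum : ∀ (f : Fin d → (Fin d → ℝ)), N (∑ j, f j) ≤ ∑ j, N (f j) := by
    intro f
    induction (Finset.univ : Finset (Fin d)) using Finset.cons_induction with
    | empty => simp [hN0]
    | cons j s hj ih =>
      rw [Finset.sum_cons, Finset.sum_cons]
      exact le_trans (hN_add _ _) (by linarith)
  have hCb : ∀ v, N v ≤ (∑ j, N (Pi.single j 1)) * ‖v‖ := by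
    intro v
    have hv : v = ∑ j, (v j) • (Pi.single j 1 : Fin d → ℝ) := by
      funext i
      simp [Finset.sum_apply, Pi.single_apply, mul_ite]
    calc N v = N (∑ j, (v j) • (Pi.single j 1 : Fin d → ℝ)) := by rw [← hv]
      _ ≤ ∑ j, N ((v j) • (Pi.single j 1 : Fin d → ℝ)) := hNsum _
      _ ≤ ∑ j, N (Pi.single j 1) * ‖v‖ := by
          refine Finset.sum_le_sum fun j _ => ?_
          rw [hN_smul, mul_comm (N (Pi.single j 1))]
          exact mul_le_mul_of_nonneg_right (by simpa using norm_le_pi_norm v j) (hNnonneg _)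
      _ = (∑ j, N (Pi.single j 1)) * ‖v‖ := by rw [Finset.sum_mul]
  -- `N` is continuous
  have hNcont : Continuous N := by
    set C := ∑ j, N (Pi.single j (1:ℝ)) with hCdef
    have hC0 : 0 ≤ C := Finset.sum_nonneg fun j _ => hNnonneg _
    have : LipschitzWith C.toNNReal N := by
      apply LipschitzWith.of_dist_le_mul
      intro u v
      rw [Real.dist_eq, Real.coe_toNNReal _ hC0]
      rw [abs_sub_le_iff]
      constructor
      · have h1 := hN_add (u - v) v
        have h2 := hCb (u - v)
        simp only [sub_add_cancel] at h1
        calc N u - N v ≤ N (u - v) := by linarith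
          _ ≤ C * ‖u - v‖ := h2
          _ = C * dist u v := by rw [dist_eq_norm]
      · have h1 := hN_add (v - u) u
        have h2 := hCb (v - u)
        simp only [sub_add_cancel] at h1
        calc N v - N u ≤ N (v - u) := by linarith
          _ ≤ C * ‖v - u‖ := h2
          _ = C * dist u v := by rw [dist_eq_norm, norm_sub_rev]
    exact this.continuous
  -- `N` dominates a multiple of the sup norm
  obtain ⟨c, hc0, hc⟩ : ∃ c > 0, ∀ v : Fin d → ℝ, c * ‖v‖ ≤ N v := by
    rcases Nat.eq_zero_or_pos d with hd | hd
    · refine ⟨1, one_pos, fun v => ?_⟩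
      have hv : v = 0 := by
        funext i; exact absurd i.isLt (by omega)
      simp [hv, hN0]
    · haveI : Nonempty (Fin d) := Fin.pos_iff_nonempty.mp hd
      have hsph : (Metric.sphere (0 : Fin d → ℝ) 1).Nonempty :=
        NormedSpace.sphere_nonempty.mpr zero_le_one
      obtain ⟨u0, hu0mem, hmin⟩ :=
        (isCompact_sphere (0 : Fin d → ℝ) 1).exists_isMinOn hsph hNcont.continuousOn
      have hu0 : ‖u0‖ = 1 := by simpa using hu0mem
      have hu0ne : u0 ≠ 0 := by
        intro h; rw [h] at hu0; simp at hu0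
      have hNu0 : 0 < N u0 := by
        rcases (hNnonneg u0).lt_or_eq with h | h
        · exact h
        · exact absurd ((hN_def u0).mp h.symm) hu0ne
      refine ⟨N u0, hNu0, fun v => ?_⟩
      rcases eq_or_ne v 0 with rfl | hv
      · simp [hN0]
      · have hnv : 0 < ‖v‖ := norm_pos_iff.mpr hv
        have hmem : (‖v‖⁻¹ • v) ∈ Metric.sphere (0 : Fin d → ℝ) 1 := by
          simp [norm_smul, abs_of_pos (inv_pos.mpr hnv), inv_mul_cancel₀ hnv.ne']
        have h : N u0 ≤ N (‖v‖⁻¹ • v) := hmin hmem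
        rw [hN_smul, abs_of_pos (inv_pos.mpr hnv)] at h
        calc N u0 * ‖v‖ ≤ (‖v‖⁻¹ * N v) * ‖v‖ := by nlinarith
          _ = N v := by field_simp
  -- Facts about the dual norm
  set D := {t : ℝ | ∃ u : Fin d → ℝ, N u ≤ 1 ∧ t = ∑ j, u j * w j} with hDdef
  have hD0 : (0 : ℝ) ∈ D := ⟨0, by simp [hN0], by simp⟩
  have hDne : D.Nonempty := ⟨0, hD0⟩
  have hDbdd : BddAbove D := by
    refine ⟨c⁻¹ * ∑ j, |w j|, fun t ht => ?_⟩
    obtain ⟨u, hu, rfl⟩ := ht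
    have hnu : ‖u‖ ≤ c⁻¹ := by
      have h1 := le_trans (hc u) hu
      rw [inv_eq_one_div, le_div_iff₀ hc0]
      linarith [mul_comm c ‖u‖]
    calc ∑ j, u j * w j ≤ ∑ j, |u j * w j| := Finset.sum_le_sum fun j _ => le_abs_self _
      _ = ∑ j, |u j| * |w j| := by simp [abs_mul]
      _ ≤ ∑ j, c⁻¹ * |w j| := by
          refine Finset.sum_le_sum fun j _ => ?_
          refine mul_le_mul_of_nonneg_right ?_ (abs_nonneg _)
          exact le_trans (by simpa using norm_le_pi_norm u j) hnu
      _ = c⁻¹ * ∑ j, |w j| := by rw [Finset.mul_sum]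
  have hs'0 : 0 ≤ dualNorm N w := le_csSup hDbdd hD0
  -- Duality inequality
  have hdual : ∀ δ : Fin d → ℝ, N δ ≤ r → |∑ j, w j * δ j| ≤ r * dualNorm N w := by
    intro δ hδ
    have key : ∀ v : Fin d → ℝ, N v ≤ r → ∑ j, w j * v j ≤ r * dualNorm N w := by
      intro v hv
      rcases eq_or_ne v 0 with rfl | hvne
      · simp [mul_nonneg hr hs'0]
      · have hNv : 0 < N v := by
          rcases (hNnonneg v).lt_or_eq with h | h
          · exact h
          · exact absurd ((hN_def v).mp h.symm) hvne
        have hmem : ∑ j, ((N v)⁻¹ • v) j * w j ∈ D :=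
          ⟨(N v)⁻¹ • v, by rw [hN_smul, abs_of_pos (inv_pos.mpr hNv), inv_mul_cancel₀ hNv.ne'], rfl⟩
        have h1 : ∑ j, ((N v)⁻¹ • v) j * w j ≤ dualNorm N w := le_csSup hDbdd hmem
        have h2 : ∑ j, ((N v)⁻¹ • v) j * w j = (N v)⁻¹ * ∑ j, w j * v j := by
          rw [Finset.mul_sum]; refine Finset.sum_congr rfl fun j _ => ?_
          simp [Pi.smul_apply, smul_eq_mul]; ring
        rw [h2] at h1
        have h3 : ∑ j, w j * v j ≤ N v * dualNorm N w := by
          have := mul_le_mul_of_nonneg_left h1 (le_of_lt hNv)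
          rw [mul_inv_cancel_left₀ hNv.ne'] at this
          linarith
        calc ∑ j, w j * v j ≤ N v * dualNorm N w := h3
          _ ≤ r * dualNorm N w := mul_le_mul_of_nonneg_right hv hs'0
    rw [abs_le]
    constructor
    · have := key (-δ) (by rw [show -δ = (-1 : ℝ) • δ by simp, hN_smul]; simpa using hδ)
      simp only [Pi.neg_apply, mul_neg, Finset.sum_neg_distrib] at this
      linarith
    · exact key δ hδ
  -- The pointwise value of the adversarial loss
  have key : ∀ x y, advLoss N r w x y = (|∑ j, w j * x j - y| + r * dualNorm N w) ^ 2 := by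
    intro x y
    set a := ∑ j, w j * x j - y with ha
    set s := r * dualNorm N w with hs
    have hs0 : 0 ≤ s := mul_nonneg hr hs'0
    have hform : ∀ δ : Fin d → ℝ, (∑ j, w j * (x j + δ j) - y) = a + ∑ j, w j * δ j := by
      intro δ; simp only [mul_add, Finset.sum_add_distrib, ha]; ring
    set S := {e : ℝ | ∃ δ : Fin d → ℝ, N δ ≤ r ∧ e = (∑ j, w j * (x j + δ j) - y) ^ 2} with hSdef
    have hSne : S.Nonempty := ⟨a ^ 2, 0, by simp [hN0, hr], by rw [hform]; simp⟩
    have hSub : ∀ e ∈ S, e ≤ (|a| + s) ^ 2 := by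
      rintro e ⟨δ, hδ, rfl⟩
      rw [hform]
      have h1 : |a + ∑ j, w j * δ j| ≤ |a| + s :=
        le_trans (abs_add_le _ _) (by linarith [hdual δ hδ])
      calc (a + ∑ j, w j * δ j) ^ 2 = |a + ∑ j, w j * δ j| ^ 2 := (sq_abs _).symm
        _ ≤ (|a| + s) ^ 2 := pow_le_pow_left₀ (abs_nonneg _) h1 2
    have hSbdd : BddAbove S := ⟨(|a| + s) ^ 2, hSub⟩
    have hL : advLoss N r w x y = sSup S := rfl
    rw [hL]
    refine le_antisymm (csSup_le hSne hSub) ?_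
    · rw [le_csSup_iff hSbdd hSne]
      intro b hb
      have hain : a ^ 2 ∈ S := ⟨0, by simp [hN0, hr], by rw [hform]; simp⟩
      have hab : a ^ 2 ≤ b := hb hain
      have hb0 : 0 ≤ b := le_trans (sq_nonneg a) hab
      have habs : |a| ≤ Real.sqrt b := by
        rw [show |a| = Real.sqrt (a ^ 2) by rw [Real.sqrt_sq_eq_abs]]
        exact Real.sqrt_le_sqrt hab
      rcases eq_or_lt_of_le hr with hr0 | hrpos
      · have : s = 0 := by rw [hs, ← hr0]; ring
        rw [this, add_zero, ← Real.sq_sqrt hb0]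
        exact pow_le_pow_left₀ (abs_nonneg _) habs 2
      · have hkey : ∀ u : Fin d → ℝ, N u ≤ 1 → ∑ j, u j * w j ≤ (Real.sqrt b - |a|) / r := by
          intro u hu
          set t := ∑ j, u j * w j with htdef
          rcases le_or_gt t 0 with ht | ht
          · have : 0 ≤ (Real.sqrt b - |a|) / r := div_nonneg (by linarith) hr
            linarith
          · set cc : ℝ := if 0 ≤ a then r else -r with hcc
            have hccabs : |cc| = r := by
              rw [hcc]; split_ifs <;> simp [abs_of_pos hrpos, abs_of_neg, hrpos]
            have hδr : N (cc • u) ≤ r := by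
              rw [hN_smul, hccabs]
              nlinarith
            have hsum : ∑ j, w j * (cc • u) j = cc * t := by
              rw [htdef, Finset.mul_sum]
              refine Finset.sum_congr rfl fun j _ => ?_
              simp [smul_eq_mul]; ring
            have hmem : (a + cc * t) ^ 2 ∈ S := ⟨cc • u, hδr, by rw [hform, hsum]⟩
            have hle : (a + cc * t) ^ 2 ≤ b := hb hmem
            have heq : (a + cc * t) ^ 2 = (|a| + r * t) ^ 2 := by
              rw [hcc]; split_ifs with h
              · rw [abs_of_nonneg h]
              · rw [abs_of_neg (not_le.mp h)]; ring
            have h2 : (|a| + r * t) ^ 2 ≤ b := heq ▸ hle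
            have h3 : |a| + r * t ≤ Real.sqrt b := by
              have hnn : 0 ≤ |a| + r * t := by positivity
              calc |a| + r * t = Real.sqrt ((|a| + r * t) ^ 2) := (Real.sqrt_sq hnn).symm
                _ ≤ Real.sqrt b := Real.sqrt_le_sqrt h2
            rw [le_div_iff₀ hrpos]; linarith
        have hd2 : dualNorm N w ≤ (Real.sqrt b - |a|) / r :=
          csSup_le hDne (fun t ⟨u, hu, htu⟩ => htu ▸ hkey u hu)
        have h4 : |a| + s ≤ Real.sqrt b := by
          rw [hs]
          have := mul_le_mul_of_nonneg_left hd2 hrpos.le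
          rw [mul_div_cancel₀ _ hrpos.ne'] at this
          linarith
        calc (|a| + s) ^ 2 ≤ (Real.sqrt b) ^ 2 := pow_le_pow_left₀ (by positivity) h4 2
          _ = b := Real.sq_sqrt hb0
  -- Now integrate the pointwise identity
  set s := r * dualNorm N w with hsdef
  have hs0 : 0 ≤ s := mul_nonneg hr hs'0
  have hrw : ∫ p, advLoss N r w p.1 p.2 ∂P
      = ∫ p, (|∑ j, w j * p.1 j - p.2| + s) ^ 2 ∂P :=
    integral_congr_ae (ae_of_all _ fun p => key p.1 p.2)
  rw [ge_iff_le, hrw, show r ^ 2 * (dualNorm N w) ^ 2 = s ^ 2 by rw [hsdef]; ring]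
  set a : (Fin d → ℝ) × ℝ → ℝ := fun p => ∑ j, w j * p.1 j - p.2 with hadef
  have hacont : Continuous a := by
    apply Continuous.sub
    · exact continuous_finset_sum _ fun j _ =>
        continuous_const.mul ((continuous_apply j).comp continuous_fst)
    · exact continuous_snd
  have hmeas : AEStronglyMeasurable a P := hacont.aestronglyMeasurable
  have hint' : Integrable (fun p => a p ^ 2) P := hint
  show (∫ p, a p ^ 2 ∂P) + s ^ 2 ≤ ∫ p, (|a p| + s) ^ 2 ∂P
  clear hint hadef hrw key hdual
  clear_value a s
  have hIabs : Integrable (fun p => |a p|) P := by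
    refine Integrable.mono' ((hint'.add (integrable_const 1)).div_const 2)
      hacont.abs.aestronglyMeasurable (ae_of_all _ fun p => ?_)
    simp only [Pi.add_apply, Real.norm_eq_abs, abs_abs]
    show |a p| ≤ (a p ^ 2 + 1) / 2
    nlinarith [sq_nonneg (|a p| - 1), sq_abs (a p)]
  have hexp : ∀ p : (Fin d → ℝ) × ℝ, (|a p| + s) ^ 2 = a p ^ 2 + (2 * s * |a p| + s ^ 2) := by
    intro p; nlinarith [sq_abs (a p)]
  have hI2 : Integrable (fun p => 2 * s * |a p| + s ^ 2) P :=
    (hIabs.const_mul (2 * s)).add (integrable_const _)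
  calc (∫ p, a p ^ 2 ∂P) + s ^ 2
      ≤ (∫ p, a p ^ 2 ∂P) + ∫ p, (2 * s * |a p| + s ^ 2) ∂P := by
        have h1 : ∫ p, (2 * s * |a p| + s ^ 2) ∂P
            = 2 * s * (∫ p, |a p| ∂P) + s ^ 2 := by
          rw [integral_add (hIabs.const_mul _) (integrable_const _), integral_const_mul,
            integral_const]
          simp [measure_univ]
        rw [h1]
        have h2 : 0 ≤ ∫ p, |a p| ∂P := integral_nonneg fun p => abs_nonneg _
        nlinarith
    _ = ∫ p, (a p ^ 2 + (2 * s * |a p| + s ^ 2)) ∂P := (integral_add hint' hI2).symm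
    _ = ∫ p, (|a p| + s) ^ 2 ∂P :=
        integral_congr_ae (ae_of_all _ fun p => (hexp p).symm)
end

section
/- Suppose x ∈ ℝ^d is distributed as the centered multivariate Gaussian with positive-definite covariance matrix Σ, z is an independent real Gaussian with mean 0 and variance σ², and y = ⟨w_0, x⟩ + z. Let ‖·‖ be any norm on ℝ^d with dual norm ‖·‖_*. Then for every w ∈ ℝ^d and r ≥ 0, the adversarial risk admits the exact formula E(w, r) = σ_w² + 2√(2/π) · r ‖w‖_* · σ_w + r² ‖w‖_*², where σ_w := √(σ² + ‖w − w_0‖_Σ²) and ‖v‖_Σ := √(vᵀΣv). -/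
open Finset MeasureTheory ProbabilityTheory

open Finset MeasureTheory ProbabilityTheory

section AdvHelpers
open Real Filter

namespace AdvHelper

lemma integral_Ioi_id_mul_exp {b : ℝ} (hb : 0 < b) :
    ∫ x in Set.Ioi (0:ℝ), x * Real.exp (-b * x ^ 2) = 1 / (2 * b) := by
  have hderiv : ∀ x ∈ Set.Ici (0:ℝ),
      HasDerivAt (fun x : ℝ => -Real.exp (-b * x ^ 2) / (2 * b))
        (x * Real.exp (-b * x ^ 2)) x := by
    intro x _
    have h1 : HasDerivAt (fun x : ℝ => -b * x ^ 2) (-b * (2 * x)) x := by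
      simpa using (hasDerivAt_pow 2 x).const_mul (-b)
    have h2 := (h1.exp).neg.div_const (2 * b)
    refine h2.congr_deriv ?_
    field_simp
  have hint : IntegrableOn (fun x : ℝ => x * Real.exp (-b * x ^ 2)) (Set.Ioi 0) :=
    (integrable_mul_exp_neg_mul_sq hb).integrableOn
  have htend : Tendsto (fun x : ℝ => -Real.exp (-b * x ^ 2) / (2 * b)) atTop (nhds 0) := by
    have h1 : Tendsto (fun x : ℝ => -b * x ^ 2) atTop atBot := by
      apply Tendsto.const_mul_atTop_of_neg (neg_neg_iff_pos.mpr hb)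
      exact tendsto_pow_atTop two_ne_zero
    have := (Real.tendsto_exp_atBot.comp h1).neg.div_const (2 * b)
    simpa using this
  have := integral_Ioi_of_hasDerivAt_of_tendsto' hderiv hint htend
  rw [this]
  field_simp
  simp

lemma integral_Ioi_sq_mul_exp {b : ℝ} (hb : 0 < b) :
    ∫ x in Set.Ioi (0:ℝ), x ^ 2 * Real.exp (-b * x ^ 2)
      = Real.sqrt (π / b) / (4 * b) := by
  have hie : IntegrableOn (fun x : ℝ => Real.exp (-b * x ^ 2)) (Set.Ioi 0) :=
    (integrable_exp_neg_mul_sq hb).integrableOn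
  have hisq : Integrable (fun x : ℝ => x ^ 2 * Real.exp (-b * x ^ 2)) := by
    have := integrable_rpow_mul_exp_neg_mul_sq hb (s := 2) (by norm_num)
    simpa [Real.rpow_natCast] using this
  have hderiv : ∀ x ∈ Set.Ici (0:ℝ),
      HasDerivAt (fun x : ℝ => -(x * Real.exp (-b * x ^ 2)) / (2 * b))
        (x ^ 2 * Real.exp (-b * x ^ 2) - Real.exp (-b * x ^ 2) / (2 * b)) x := by
    intro x _
    have h1 : HasDerivAt (fun x : ℝ => -b * x ^ 2) (-b * (2 * x)) x := by
      simpa using (hasDerivAt_pow 2 x).const_mul (-b)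
    have h2 : HasDerivAt (fun x : ℝ => x * Real.exp (-b * x ^ 2))
        (1 * Real.exp (-b * x ^ 2) + x * (Real.exp (-b * x ^ 2) * (-b * (2 * x)))) x :=
      (hasDerivAt_id x).mul h1.exp
    have h3 := (h2.neg).div_const (2 * b)
    refine h3.congr_deriv ?_
    field_simp
    ring
  have hint : IntegrableOn
      (fun x : ℝ => x ^ 2 * Real.exp (-b * x ^ 2) - Real.exp (-b * x ^ 2) / (2 * b))
      (Set.Ioi 0) :=
    (hisq.integrableOn).sub (hie.div_const _)
  have htend : Tendsto (fun x : ℝ => -(x * Real.exp (-b * x ^ 2)) / (2 * b)) atTop (nhds 0) := by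
    have h1 : Tendsto (fun x : ℝ => x * Real.exp (-b * x ^ 2)) atTop (nhds 0) := by
      have h := rpow_mul_exp_neg_mul_sq_isLittleO_exp_neg hb 1
      have h2 : Tendsto (fun x : ℝ => Real.exp (-(1/2) * x)) atTop (nhds 0) := by
        apply Real.tendsto_exp_atBot.comp
        exact Tendsto.const_mul_atTop_of_neg (by norm_num) tendsto_id
      have h3 := h.tendsto_zero_of_tendsto h2
      simpa [Real.rpow_one] using h3
    simpa using (h1.neg.div_const (2 * b))
  have key := integral_Ioi_of_hasDerivAt_of_tendsto' hderiv hint htend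
  have hsplit : ∫ x in Set.Ioi (0:ℝ),
      (x ^ 2 * Real.exp (-b * x ^ 2) - Real.exp (-b * x ^ 2) / (2 * b))
      = (∫ x in Set.Ioi (0:ℝ), x ^ 2 * Real.exp (-b * x ^ 2))
        - ∫ x in Set.Ioi (0:ℝ), Real.exp (-b * x ^ 2) / (2 * b) :=
    integral_sub hisq.integrableOn (hie.div_const _)
  rw [hsplit] at key
  have h4 : ∫ x in Set.Ioi (0:ℝ), Real.exp (-b * x ^ 2) / (2 * b)
      = Real.sqrt (π / b) / 2 / (2 * b) := by
    rw [integral_div, integral_gaussian_Ioi]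
  rw [h4] at key
  have : (0:ℝ) - -(0 * Real.exp (-b * 0 ^ 2)) / (2 * b) = 0 := by simp
  rw [this] at key
  have : (∫ x in Set.Ioi (0:ℝ), x ^ 2 * Real.exp (-b * x ^ 2))
      = Real.sqrt (π / b) / 2 / (2 * b) := by linarith
  rw [this]; ring

end AdvHelper
namespace AdvHelper2

lemma integral_abs_mul_exp {b : ℝ} (hb : 0 < b) :
    ∫ x : ℝ, |x| * Real.exp (-b * x ^ 2) = 1 / b := by
  have h := integral_comp_abs (f := fun x : ℝ => x * Real.exp (-b * x ^ 2))
  simp only [sq_abs] at h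
  rw [h, AdvHelper.integral_Ioi_id_mul_exp hb]
  ring

lemma integrable_abs_mul_exp {b : ℝ} (hb : 0 < b) :
    Integrable (fun x : ℝ => |x| * Real.exp (-b * x ^ 2)) := by
  have := (integrable_mul_exp_neg_mul_sq hb).abs
  refine this.congr ?_
  filter_upwards with x
  rw [abs_mul, abs_of_pos (Real.exp_pos _)]

lemma integrable_sq_mul_exp {b : ℝ} (hb : 0 < b) :
    Integrable (fun x : ℝ => x ^ 2 * Real.exp (-b * x ^ 2)) := by
  have := integrable_rpow_mul_exp_neg_mul_sq hb (s := 2) (by norm_num)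
  simpa [Real.rpow_natCast] using this

lemma integral_sq_mul_exp {b : ℝ} (hb : 0 < b) :
    ∫ x : ℝ, x ^ 2 * Real.exp (-b * x ^ 2) = Real.sqrt (π / b) / (2 * b) := by
  have h := integral_comp_abs (f := fun x : ℝ => x ^ 2 * Real.exp (-b * x ^ 2))
  simp only [sq_abs] at h
  rw [h, AdvHelper.integral_Ioi_sq_mul_exp hb]
  ring

end AdvHelper2
namespace AdvHelper3

variable {v : NNReal}

lemma gaussianPDF_eq_coe (v : NNReal) (x : ℝ) :
    gaussianPDF 0 v x = ((gaussianPDFReal 0 v x).toNNReal : ENNReal) := rfl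

lemma integral_gaussianReal_eq (hv : v ≠ 0) (g : ℝ → ℝ) :
    ∫ x, g x ∂(gaussianReal 0 v) = ∫ x, gaussianPDFReal 0 v x * g x := by
  rw [gaussianReal_of_var_ne_zero _ hv]
  have hmeas : Measurable fun x => (gaussianPDFReal 0 v x).toNNReal :=
    (measurable_gaussianPDFReal 0 v).real_toNNReal
  have : (gaussianPDF 0 v) = fun x => ((gaussianPDFReal 0 v x).toNNReal : ENNReal) := rfl
  rw [this, integral_withDensity_eq_integral_smul hmeas]
  congr 1
  ext x
  rw [NNReal.smul_def, smul_eq_mul, Real.coe_toNNReal _ (gaussianPDFReal_nonneg _ _ _)]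

lemma integrable_gaussianReal (hv : v ≠ 0) {g : ℝ → ℝ} (hg : Measurable g)
    (hint : Integrable (fun x => gaussianPDFReal 0 v x * g x)) :
    Integrable g (gaussianReal 0 v) := by
  rw [gaussianReal_of_var_ne_zero _ hv]
  have hmeas : Measurable fun x => (gaussianPDFReal 0 v x).toNNReal :=
    (measurable_gaussianPDFReal 0 v).real_toNNReal
  have h : (gaussianPDF 0 v) = fun x => ((gaussianPDFReal 0 v x).toNNReal : ENNReal) := rfl
  rw [h, integrable_withDensity_iff_integrable_smul hmeas]
  refine hint.congr ?_
  filter_upwards with x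
  rw [NNReal.smul_def, smul_eq_mul, Real.coe_toNNReal _ (gaussianPDFReal_nonneg _ _ _)]

lemma pdf_mul (hv : v ≠ 0) (g : ℝ → ℝ) (x : ℝ) :
    gaussianPDFReal 0 v x * g x
      = (Real.sqrt (2 * π * v))⁻¹ * (g x * Real.exp (-(2 * (v:ℝ))⁻¹ * x ^ 2)) := by
  rw [gaussianPDFReal]
  ring_nf

lemma hb_pos (hv : v ≠ 0) : 0 < (2 * (v:ℝ))⁻¹ := by
  have h : 0 < (v:ℝ) := NNReal.coe_pos.mpr (pos_iff_ne_zero.mpr hv)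
  positivity

lemma sqrt_2piv_pos (hv : v ≠ 0) : 0 < Real.sqrt (2 * π * v) := by
  have h : 0 < (v:ℝ) := NNReal.coe_pos.mpr (pos_iff_ne_zero.mpr hv)
  have := Real.pi_pos
  positivity

lemma integral_sq_gaussianReal (v : NNReal) :
    ∫ x, x ^ 2 ∂(gaussianReal 0 v) = (v:ℝ) := by
  by_cases hv : v = 0
  · subst hv; rw [gaussianReal_zero_var, integral_dirac]; norm_num
  · have hvpos : 0 < (v:ℝ) := NNReal.coe_pos.mpr (pos_iff_ne_zero.mpr hv)
    rw [integral_gaussianReal_eq hv]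
    simp only [pdf_mul hv (fun y => y ^ 2)]
    rw [integral_const_mul, AdvHelper2.integral_sq_mul_exp (hb_pos hv)]
    have h1 : π / (2 * (v:ℝ))⁻¹ = 2 * π * v := by field_simp
    rw [h1]
    have h2 : Real.sqrt (2 * π * (v:ℝ)) / (2 * (2 * (v:ℝ))⁻¹)
        = Real.sqrt (2 * π * v) * v := by field_simp
    rw [h2, ← mul_assoc, inv_mul_cancel₀ (sqrt_2piv_pos hv).ne', one_mul]

lemma integral_abs_gaussianReal (v : NNReal) :
    ∫ x, |x| ∂(gaussianReal 0 v) = Real.sqrt (2 / π) * Real.sqrt v := by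
  by_cases hv : v = 0
  · subst hv; rw [gaussianReal_zero_var, integral_dirac]; simp
  · have hvpos : 0 < (v:ℝ) := NNReal.coe_pos.mpr (pos_iff_ne_zero.mpr hv)
    have hpi := Real.pi_pos
    rw [integral_gaussianReal_eq hv]
    simp only [pdf_mul hv (fun y => |y|)]
    rw [integral_const_mul, AdvHelper2.integral_abs_mul_exp (hb_pos hv)]
    have h1 : 1 / (2 * (v:ℝ))⁻¹ = 2 * v := by field_simp
    rw [h1, inv_mul_eq_div, div_eq_iff (sqrt_2piv_pos hv).ne']
    rw [show (2:ℝ) * v = Real.sqrt ((2*(v:ℝ))^2) by rw [Real.sqrt_sq (by positivity)]]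
    rw [← Real.sqrt_mul (by positivity), ← Real.sqrt_mul (by positivity)]
    congr 1
    field_simp

lemma integrable_sq_gaussianReal (v : NNReal) :
    Integrable (fun x : ℝ => x ^ 2) (gaussianReal 0 v) := by
  by_cases hv : v = 0
  · rw [hv, gaussianReal_zero_var]
    exact (integrable_const _).congr (MeasureTheory.ae_eq_dirac _).symm
  · refine integrable_gaussianReal hv (by fun_prop) ?_
    simp only [pdf_mul hv (fun y => y ^ 2)]
    exact (AdvHelper2.integrable_sq_mul_exp (hb_pos hv)).const_mul _

lemma integrable_abs_gaussianReal (v : NNReal) :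
    Integrable (fun x : ℝ => |x|) (gaussianReal 0 v) := by
  by_cases hv : v = 0
  · rw [hv, gaussianReal_zero_var]
    exact (integrable_const _).congr (MeasureTheory.ae_eq_dirac _).symm
  · refine integrable_gaussianReal hv (by fun_prop) ?_
    simp only [pdf_mul hv (fun y => |y|)]
    exact (AdvHelper2.integrable_abs_mul_exp (hb_pos hv)).const_mul _

end AdvHelper3
namespace AdvHelper4

lemma gaussianPDFReal_conv_key (a b : NNReal) (ha : a ≠ 0) (hb : b ≠ 0) (u s : ℝ) :
    gaussianPDFReal 0 a s * gaussianPDFReal 0 b (u - s) =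
      gaussianPDFReal 0 (a + b) u
        * gaussianPDFReal 0 (a * b / (a + b)) (s - (a : ℝ) * u / ((a : ℝ) + b)) := by
  have hA : 0 < (a:ℝ) := NNReal.coe_pos.mpr (pos_iff_ne_zero.mpr ha)
  have hB : 0 < (b:ℝ) := NNReal.coe_pos.mpr (pos_iff_ne_zero.mpr hb)
  have hAB : 0 < (a:ℝ) + b := by linarith
  have hpi := Real.pi_pos
  have hc : ((a * b / (a + b) : NNReal) : ℝ) = (a:ℝ) * b / ((a:ℝ) + b) := by
    push_cast
    ring
  simp only [gaussianPDFReal, sub_zero, hc, NNReal.coe_add]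
  rw [mul_mul_mul_comm, mul_mul_mul_comm ((Real.sqrt (2 * π * ((a:ℝ) + b)))⁻¹),
    ← Real.exp_add, ← Real.exp_add]
  congr 1
  · rw [← mul_inv, ← mul_inv, ← Real.sqrt_mul (by positivity), ← Real.sqrt_mul (by positivity)]
    congr 2
    field_simp
  · congr 1
    field_simp
    ring

lemma c_ne_zero {a b : NNReal} (ha : a ≠ 0) (hb : b ≠ 0) : a * b / (a + b) ≠ 0 := by
  have hA : 0 < (a:ℝ) := NNReal.coe_pos.mpr (pos_iff_ne_zero.mpr ha)
  have hB : 0 < (b:ℝ) := NNReal.coe_pos.mpr (pos_iff_ne_zero.mpr hb)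
  have : 0 < ((a * b / (a + b) : NNReal) : ℝ) := by
    push_cast
    positivity
  exact fun h => by simp [h] at this

lemma integrable_conv (a b : NNReal) (ha : a ≠ 0) (hb : b ≠ 0) (u : ℝ) :
    Integrable (fun s => gaussianPDFReal 0 a s * gaussianPDFReal 0 b (u - s)) := by
  simp only [gaussianPDFReal_conv_key a b ha hb u]
  exact ((integrable_gaussianPDFReal 0 (a * b / (a + b))).comp_sub_right _).const_mul _

lemma integral_conv (a b : NNReal) (ha : a ≠ 0) (hb : b ≠ 0) (u : ℝ) :
    ∫ s, gaussianPDFReal 0 a s * gaussianPDFReal 0 b (u - s)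
      = gaussianPDFReal 0 (a + b) u := by
  simp only [gaussianPDFReal_conv_key a b ha hb u]
  rw [integral_const_mul, integral_sub_right_eq_self (gaussianPDFReal 0 (a * b / (a + b))),
    integral_gaussianPDFReal_eq_one 0 (c_ne_zero ha hb), mul_one]

lemma lintegral_conv (a b : NNReal) (ha : a ≠ 0) (hb : b ≠ 0) (u : ℝ) :
    ∫⁻ s, gaussianPDF 0 a s * gaussianPDF 0 b (u - s) = gaussianPDF 0 (a + b) u := by
  have h1 : ∀ s : ℝ, gaussianPDF 0 a s * gaussianPDF 0 b (u - s)
      = ENNReal.ofReal (gaussianPDFReal 0 a s * gaussianPDFReal 0 b (u - s)) := by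
    intro s
    rw [gaussianPDF, gaussianPDF, ← ENNReal.ofReal_mul (gaussianPDFReal_nonneg _ _ _)]
  simp only [h1]
  rw [← ofReal_integral_eq_lintegral_ofReal (integrable_conv a b ha hb u)
    (Filter.Eventually.of_forall fun s =>
      mul_nonneg (gaussianPDFReal_nonneg _ _ _) (gaussianPDFReal_nonneg _ _ _))]
  rw [integral_conv a b ha hb u]
  rfl

end AdvHelper4
namespace AdvHelper5

lemma map_prod_add_gaussianReal (a b : NNReal) (ha : a ≠ 0) (hb : b ≠ 0) :
    Measure.map (fun p : ℝ × ℝ => p.1 + p.2)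
        ((gaussianReal 0 a).prod (gaussianReal 0 b)) = gaussianReal 0 (a + b) := by
  refine Measure.ext fun t ht => ?_
  rw [Measure.map_apply measurable_add ht, Measure.prod_apply (measurable_add ht)]
  have hset : ∀ s : ℝ, (Prod.mk s ⁻¹' ((fun p : ℝ × ℝ => p.1 + p.2) ⁻¹' t))
      = {y : ℝ | s + y ∈ t} := fun s => rfl
  simp only [hset]
  have hb' : ∀ s : ℝ, gaussianReal 0 b {y : ℝ | s + y ∈ t}
      = ∫⁻ u, t.indicator 1 u * gaussianPDF 0 b (u - s) := by
    intro s
    rw [gaussianReal_apply 0 hb]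
    have hms : MeasurableSet {y : ℝ | s + y ∈ t} :=
      (measurable_const_add s) ht
    rw [← lintegral_indicator hms _]
    have h1 : ∀ y : ℝ, ({y : ℝ | s + y ∈ t}).indicator (gaussianPDF 0 b) y
        = (fun u => t.indicator 1 u * gaussianPDF 0 b (u - s)) (y + s) := by
      intro y
      simp only [Set.indicator, Set.mem_setOf_eq, add_sub_cancel_right]
      by_cases h : s + y ∈ t
      · rw [if_pos (show y ∈ {y | s + y ∈ t} from h), if_pos (by rwa [add_comm] : y + s ∈ t), Pi.one_apply, one_mul]
      · rw [if_neg (show y ∉ {y | s + y ∈ t} from h), if_neg (by rwa [add_comm] : ¬ y + s ∈ t), zero_mul]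
    simp only [h1]
    exact lintegral_add_right_eq_self (fun u => t.indicator 1 u * gaussianPDF 0 b (u - s)) s
  simp only [hb']
  -- outer integral over gaussianReal 0 a = withDensity
  rw [gaussianReal_of_var_ne_zero 0 ha]
  have hmeas_ind : Measurable (t.indicator (1 : ℝ → ENNReal)) :=
    measurable_one.indicator ht
  have hmeas_inner : Measurable fun s : ℝ => ∫⁻ u, t.indicator 1 u * gaussianPDF 0 b (u - s) := by
    apply Measurable.lintegral_prod_right (f := fun (s u : ℝ) => t.indicator 1 u * gaussianPDF 0 b (u - s))
    exact ((hmeas_ind.comp measurable_snd).mul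
      ((measurable_gaussianPDF 0 b).comp (measurable_snd.sub measurable_fst)))
  rw [lintegral_withDensity_eq_lintegral_mul _ (measurable_gaussianPDF 0 a) hmeas_inner]
  have hswap : ∫⁻ s, (gaussianPDF 0 a * fun s => ∫⁻ u, t.indicator 1 u * gaussianPDF 0 b (u - s)) s
      = ∫⁻ u, ∫⁻ s, gaussianPDF 0 a s * (t.indicator 1 u * gaussianPDF 0 b (u - s)) := by
    simp only [Pi.mul_apply]
    have : ∀ s : ℝ, gaussianPDF 0 a s * ∫⁻ u, t.indicator 1 u * gaussianPDF 0 b (u - s)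
        = ∫⁻ u, gaussianPDF 0 a s * (t.indicator 1 u * gaussianPDF 0 b (u - s)) := by
      intro s
      have hm : Measurable fun u : ℝ => t.indicator 1 u * gaussianPDF 0 b (u - s) :=
        hmeas_ind.mul ((measurable_gaussianPDF 0 b).comp (measurable_id.sub measurable_const))
      exact (lintegral_const_mul _ hm).symm
    simp only [this]
    exact lintegral_lintegral_swap (((measurable_gaussianPDF 0 a).comp measurable_fst).mul
      (((hmeas_ind.comp measurable_snd).mul ((measurable_gaussianPDF 0 b).comp
        (measurable_snd.sub measurable_fst))))).aemeasurable
  rw [hswap]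
  have hinner : ∀ u : ℝ, ∫⁻ s, gaussianPDF 0 a s * (t.indicator 1 u * gaussianPDF 0 b (u - s))
      = t.indicator 1 u * gaussianPDF 0 (a + b) u := by
    intro u
    have hm : Measurable fun s : ℝ => gaussianPDF 0 a s * gaussianPDF 0 b (u - s) :=
      (measurable_gaussianPDF 0 a).mul ((measurable_gaussianPDF 0 b).comp
        (measurable_const.sub measurable_id))
    rw [← AdvHelper4.lintegral_conv a b ha hb u, ← lintegral_const_mul _ hm]
    congr 1
    ext s
    ring
  simp only [hinner]
  have : ∀ u : ℝ, t.indicator 1 u * gaussianPDF 0 (a + b) u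
      = t.indicator (gaussianPDF 0 (a + b)) u := by
    intro u
    simp only [Set.indicator]
    by_cases h : u ∈ t
    · rw [if_pos h, if_pos h, Pi.one_apply, one_mul]
    · rw [if_neg h, if_neg h, zero_mul]
  simp only [this]
  rw [lintegral_indicator ht _]
  exact (gaussianReal_apply 0 (by simp [ha] : a + b ≠ 0) t).symm

lemma map_add_gaussianReal {Ω : Type*} [MeasurableSpace Ω] (μ : Measure Ω)
    [IsProbabilityMeasure μ] (X Y : Ω → ℝ) (hXY : IndepFun X Y μ) (a b : NNReal)
    (hX : Measure.map X μ = gaussianReal 0 a) (hY : Measure.map Y μ = gaussianReal 0 b) :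
    Measure.map (fun ω => X ω + Y ω) μ = gaussianReal 0 (a + b) := by
  have hXm : AEMeasurable X μ := aemeasurable_of_map_neZero (by rw [hX]; infer_instance)
  have hYm : AEMeasurable Y μ := aemeasurable_of_map_neZero (by rw [hY]; infer_instance)
  by_cases ha : a = 0
  · subst ha
    rw [gaussianReal_zero_var] at hX
    have hX0 : X =ᵐ[μ] fun _ => 0 := by
      rw [Filter.EventuallyEq, ae_iff]
      have : {ω | ¬ X ω = (fun _ => (0:ℝ)) ω} = X ⁻¹' ({0}ᶜ) := rfl
      rw [this, ← Measure.map_apply_of_aemeasurable hXm (measurableSet_singleton 0).compl, hX]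
      simp
    have : (fun ω => X ω + Y ω) =ᵐ[μ] Y := by
      filter_upwards [hX0] with ω hω
      simp [hω]
    rw [Measure.map_congr this, hY, zero_add]
  · by_cases hb : b = 0
    · subst hb
      rw [gaussianReal_zero_var] at hY
      have hY0 : Y =ᵐ[μ] fun _ => 0 := by
        rw [Filter.EventuallyEq, ae_iff]
        have : {ω | ¬ Y ω = (fun _ => (0:ℝ)) ω} = Y ⁻¹' ({0}ᶜ) := rfl
        rw [this, ← Measure.map_apply_of_aemeasurable hYm (measurableSet_singleton 0).compl, hY]
        simp
      have : (fun ω => X ω + Y ω) =ᵐ[μ] X := by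
        filter_upwards [hY0] with ω hω
        simp [hω]
      rw [Measure.map_congr this, hX, add_zero]
    · have hprod : Measure.map (fun ω => (X ω, Y ω)) μ = (Measure.map X μ).prod (Measure.map Y μ) :=
        (indepFun_iff_map_prod_eq_prod_map_map hXm hYm).mp hXY
      have hcomp : (fun ω => X ω + Y ω)
          = (fun p : ℝ × ℝ => p.1 + p.2) ∘ (fun ω => (X ω, Y ω)) := rfl
      rw [hcomp, ← AEMeasurable.map_map_of_aemeasurable measurable_add.aemeasurable
        (hXm.prodMk hYm), hprod, hX, hY]
      exact map_prod_add_gaussianReal a b ha hb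

end AdvHelper5

namespace AdvHelper6


variable {d : ℕ} {N : (Fin d → ℝ) → ℝ}
  (hN_def : ∀ v : Fin d → ℝ, N v = 0 ↔ v = 0)
  (hN_smul : ∀ (a : ℝ) (v : Fin d → ℝ), N (a • v) = |a| * N v)
  (hN_add : ∀ u v : Fin d → ℝ, N (u + v) ≤ N u + N v)

include hN_def hN_smul hN_add

omit hN_smul hN_add in
lemma N_zero : N 0 = 0 := (hN_def 0).mpr rfl

omit hN_add in
lemma N_neg (v : Fin d → ℝ) : N (-v) = N v := by
  have := hN_smul (-1) v
  simpa using this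

lemma N_nonneg (v : Fin d → ℝ) : 0 ≤ N v := by
  have h := hN_add v (-v)
  rw [add_neg_cancel, N_zero hN_def, N_neg hN_def hN_smul] at h
  linarith

lemma N_sum_le {ι : Type*} (s : Finset ι) (f : ι → (Fin d → ℝ)) :
    N (∑ i ∈ s, f i) ≤ ∑ i ∈ s, N (f i) := by
  classical
  induction s using Finset.induction_on with
  | empty => simp [N_zero hN_def]
  | insert _ _ hnotmem ih =>
    rw [Finset.sum_insert hnotmem, Finset.sum_insert hnotmem]
    exact le_trans (hN_add _ _) (by linarith)

lemma N_lipschitz_bound (u v : Fin d → ℝ) :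
    N u ≤ N v + (∑ j, N (Pi.single j 1)) * ‖u - v‖ := by
  have h1 : u = v + (u - v) := by ring
  have h2 : N u ≤ N v + N (u - v) := by
    calc N u = N (v + (u - v)) := by rw [← h1]
    _ ≤ N v + N (u - v) := hN_add _ _
  have h3 : N (u - v) ≤ (∑ j, N (Pi.single j 1)) * ‖u - v‖ := by
    have hdecomp : u - v = ∑ j, (u - v) j • (Pi.single j 1 : Fin d → ℝ) := by
      ext k
      rw [Finset.sum_apply]
      simp [Pi.single_apply]
    calc N (u - v) = N (∑ j, (u - v) j • (Pi.single j 1 : Fin d → ℝ)) := by rw [← hdecomp]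
    _ ≤ ∑ j, N ((u - v) j • (Pi.single j 1 : Fin d → ℝ)) := N_sum_le hN_def hN_smul hN_add _ _
    _ = ∑ j, |(u - v) j| * N (Pi.single j 1) := by simp [hN_smul]
    _ ≤ ∑ j, ‖u - v‖ * N (Pi.single j 1) := by
        refine Finset.sum_le_sum fun j _ => ?_
        refine mul_le_mul_of_nonneg_right ?_ (N_nonneg hN_def hN_smul hN_add _)
        exact norm_le_pi_norm (u - v) j
    _ = (∑ j, N (Pi.single j 1)) * ‖u - v‖ := by
        rw [Finset.sum_mul]
        exact Finset.sum_congr rfl fun j _ => mul_comm _ _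
  linarith

lemma N_continuous : Continuous N := by
  set K := ∑ j, N (Pi.single j 1) with hK
  have hlip : LipschitzWith (Real.toNNReal K) N := by
    refine LipschitzWith.of_dist_le_mul fun u v => ?_
    rw [Real.dist_eq, dist_eq_norm]
    have h1 := N_lipschitz_bound hN_def hN_smul hN_add u v
    have h2 := N_lipschitz_bound hN_def hN_smul hN_add v u
    rw [show v - u = -(u - v) by ring, norm_neg] at h2
    have hcoe : (Real.toNNReal K : ℝ) = max K 0 := by
      simp [Real.coe_toNNReal']
    rw [hcoe]
    have hnn : 0 ≤ ‖u - v‖ := norm_nonneg _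
    rw [abs_le]
    constructor
    · nlinarith [le_max_left K 0, le_max_right K 0]
    · nlinarith [le_max_left K 0, le_max_right K 0]
  exact hlip.continuous

lemma N_min : ∃ m : ℝ, 0 < m ∧ ∀ u : Fin d → ℝ, m * ‖u‖ ≤ N u := by
  by_cases hd : d = 0
  · refine ⟨1, one_pos, fun u => ?_⟩
    subst hd
    have h : u = 0 := Subsingleton.elim u 0
    rw [h, norm_zero, N_zero hN_def, mul_zero]
  · have : Nontrivial (Fin d → ℝ) := by
      have : 0 < d := Nat.pos_of_ne_zero hd
      exact ⟨⟨Pi.single ⟨0, this⟩ 1, 0, by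
        intro h
        have := congrFun h ⟨0, this⟩
        simp [Pi.single_apply] at this⟩⟩
    obtain ⟨x0, hx0⟩ := exists_norm_eq (Fin d → ℝ) (zero_le_one (α := ℝ))
    have hcpt : IsCompact (Metric.sphere (0 : Fin d → ℝ) 1) := isCompact_sphere 0 1
    obtain ⟨u0, hu0mem, hu0min⟩ := hcpt.exists_isMinOn ⟨x0, by simpa using hx0⟩
      ((N_continuous hN_def hN_smul hN_add).continuousOn)
    have hu0norm : ‖u0‖ = 1 := by simpa using hu0mem
    have hu0ne : u0 ≠ 0 := fun h => by simp [h] at hu0norm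
    have hm : 0 < N u0 :=
      lt_of_le_of_ne (N_nonneg hN_def hN_smul hN_add u0)
        (fun h => hu0ne ((hN_def u0).mp h.symm))
    refine ⟨N u0, hm, fun u => ?_⟩
    by_cases hu : u = 0
    · rw [hu, norm_zero, N_zero hN_def, mul_zero]
    · have hnu : 0 < ‖u‖ := norm_pos_iff.mpr hu
      have hmem : ‖u‖⁻¹ • u ∈ Metric.sphere (0 : Fin d → ℝ) 1 := by
        simp [norm_smul, abs_of_pos (inv_pos.mpr hnu), inv_mul_cancel₀ hnu.ne']
      have h1 : N u0 ≤ N (‖u‖⁻¹ • u) := hu0min hmem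
      have h2 : N (‖u‖⁻¹ • u) = ‖u‖⁻¹ * N u := by
        rw [hN_smul, abs_of_pos (inv_pos.mpr hnu)]
      rw [h2] at h1
      calc N u0 * ‖u‖ ≤ (‖u‖⁻¹ * N u) * ‖u‖ := by
            exact mul_le_mul_of_nonneg_right h1 hnu.le
      _ = N u := by field_simp

variable (w : Fin d → ℝ)

lemma D_nonempty : {t : ℝ | ∃ u : Fin d → ℝ, N u ≤ 1 ∧ t = ∑ j, u j * w j}.Nonempty := by
  refine ⟨0, 0, ?_, by simp⟩
  rw [N_zero hN_def]
  exact zero_le_one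

lemma D_bddAbove : BddAbove {t : ℝ | ∃ u : Fin d → ℝ, N u ≤ 1 ∧ t = ∑ j, u j * w j} := by
  obtain ⟨m, hm, hmin⟩ := N_min hN_def hN_smul hN_add
  refine ⟨m⁻¹ * ∑ j, |w j|, fun t ht => ?_⟩
  obtain ⟨u, hu, rfl⟩ := ht
  have hnu : ‖u‖ ≤ m⁻¹ := by
    have := hmin u
    rw [← le_div_iff₀' hm] at this
    calc ‖u‖ ≤ N u / m := this
    _ ≤ 1 / m := by gcongr
    _ = m⁻¹ := one_div m
  calc ∑ j, u j * w j ≤ ∑ j, |u j * w j| := Finset.sum_le_sum fun j _ => le_abs_self _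
  _ = ∑ j, |u j| * |w j| := by simp [abs_mul]
  _ ≤ ∑ j, m⁻¹ * |w j| := by
      refine Finset.sum_le_sum fun j _ => ?_
      exact mul_le_mul_of_nonneg_right ((norm_le_pi_norm u j).trans hnu) (abs_nonneg _)
  _ = m⁻¹ * ∑ j, |w j| := by rw [Finset.mul_sum]

lemma dualNorm_nonneg : 0 ≤ dualNorm N w := by
  refine le_csSup (D_bddAbove hN_def hN_smul hN_add w) ?_
  refine ⟨0, ?_, by simp⟩
  rw [N_zero hN_def]
  exact zero_le_one

lemma pair_le {r : ℝ} (hr : 0 ≤ r) (δ : Fin d → ℝ) (hδ : N δ ≤ r) :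
    ∑ j, δ j * w j ≤ r * dualNorm N w := by
  rcases eq_or_lt_of_le hr with hr0 | hr0
  · have hNδ : N δ = 0 := le_antisymm (by rw [← hr0] at hδ; exact hδ)
      (N_nonneg hN_def hN_smul hN_add δ)
    have : δ = 0 := (hN_def δ).mp hNδ
    simp [this, ← hr0]
  · set u := r⁻¹ • δ with hu
    have hNu : N u ≤ 1 := by
      rw [hu, hN_smul, abs_of_pos (inv_pos.mpr hr0)]
      rw [inv_mul_le_iff₀ hr0, mul_one]
      exact hδ
    have hmem : ∑ j, u j * w j ∈
        {t : ℝ | ∃ u : Fin d → ℝ, N u ≤ 1 ∧ t = ∑ j, u j * w j} := ⟨u, hNu, rfl⟩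
    have h1 : ∑ j, u j * w j ≤ dualNorm N w :=
      le_csSup (D_bddAbove hN_def hN_smul hN_add w) hmem
    have h2 : ∑ j, δ j * w j = r * ∑ j, u j * w j := by
      rw [hu, Finset.mul_sum]
      refine Finset.sum_congr rfl fun j _ => ?_
      simp only [Pi.smul_apply, smul_eq_mul]
      field_simp
    rw [h2]
    exact mul_le_mul_of_nonneg_left h1 hr0.le


set_option maxHeartbeats 800000 in
lemma advLoss_eq (w : Fin d → ℝ) {r : ℝ} (hr : 0 ≤ r) (X : Fin d → ℝ) (Y : ℝ) :
    advLoss N r w X Y = (|∑ j, w j * X j - Y| + r * dualNorm N w) ^ 2 := by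
  classical
  set G : ℝ := ∑ j, w j * X j - Y with hG
  set a : ℝ := r * dualNorm N w with ha
  have ha0 : 0 ≤ a := mul_nonneg hr (dualNorm_nonneg hN_def hN_smul hN_add w)
  set S : Set ℝ := {e : ℝ | ∃ δ : Fin d → ℝ, N δ ≤ r ∧ e = (∑ j, w j * (X j + δ j) - Y) ^ 2}
    with hS
  have hform : ∀ δ : Fin d → ℝ, (∑ j, w j * (X j + δ j) - Y) = G + ∑ j, δ j * w j := by
    intro δ
    rw [hG]
    rw [show ∑ j, w j * (X j + δ j) = ∑ j, w j * X j + ∑ j, δ j * w j by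
      rw [← Finset.sum_add_distrib]
      exact Finset.sum_congr rfl fun j _ => by ring]
    ring
  have hSne : S.Nonempty := by
    refine ⟨G ^ 2, 0, ?_, ?_⟩
    · rw [N_zero hN_def]; exact hr
    · rw [hform 0]; simp
  have hub : ∀ e ∈ S, e ≤ (|G| + a) ^ 2 := by
    rintro e ⟨δ, hδ, rfl⟩
    rw [hform δ]
    have h1 : ∑ j, δ j * w j ≤ a := pair_le hN_def hN_smul hN_add w hr δ hδ
    have h2 : -(∑ j, δ j * w j) ≤ a := by
      have hneg : N (-δ) ≤ r := by rw [N_neg hN_def hN_smul]; exact hδ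
      have := pair_le hN_def hN_smul hN_add w hr (-δ) hneg
      rw [show ∑ j, (-δ) j * w j = -(∑ j, δ j * w j) by
        rw [← Finset.sum_neg_distrib]
        exact Finset.sum_congr rfl fun j _ => by simp] at this
      exact this
    have habs : |G + ∑ j, δ j * w j| ≤ |G| + a := by
      refine (abs_add_le _ _).trans ?_
      have : |∑ j, δ j * w j| ≤ a := abs_le.mpr ⟨by linarith, h1⟩
      linarith
    calc (G + ∑ j, δ j * w j) ^ 2 = |G + ∑ j, δ j * w j| ^ 2 := (sq_abs _).symm
    _ ≤ (|G| + a) ^ 2 := by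
        refine pow_le_pow_left₀ (abs_nonneg _) habs 2
  have hSbdd : BddAbove S := ⟨(|G| + a) ^ 2, hub⟩
  refine le_antisymm (csSup_le hSne hub) ?_
  -- lower bound
  set D : Set ℝ := {t : ℝ | ∃ u : Fin d → ℝ, N u ≤ 1 ∧ t = ∑ j, u j * w j} with hD
  have hmemS : ∀ c ∈ D, (|G| + r * max c 0) ^ 2 ≤ sSup S := by
    rintro c ⟨u, hu, rfl⟩
    by_cases hc : 0 ≤ ∑ j, u j * w j
    · rw [max_eq_left hc]
      set sgn : ℝ := if 0 ≤ G then 1 else -1 with hsgn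
      have hsgnabs : |sgn| = 1 := by
        rw [hsgn]; split_ifs <;> simp
      have hsgnG : sgn * G = |G| := by
        rw [hsgn]; split_ifs with h
        · rw [one_mul, abs_of_nonneg h]
        · rw [neg_one_mul, abs_of_neg (not_le.mp h)]
      set δ : Fin d → ℝ := (sgn * r) • u with hδdef
      have hNδ : N δ ≤ r := by
        rw [hδdef, hN_smul, abs_mul, hsgnabs, one_mul, abs_of_nonneg hr]
        calc r * N u ≤ r * 1 := by
              exact mul_le_mul_of_nonneg_left hu hr
        _ = r := mul_one r
      have hsum : ∑ j, δ j * w j = sgn * r * ∑ j, u j * w j := by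
        rw [hδdef, Finset.mul_sum]
        exact Finset.sum_congr rfl fun j _ => by
          simp only [Pi.smul_apply, smul_eq_mul]; ring
      have hmem : (G + ∑ j, δ j * w j) ^ 2 ∈ S := ⟨δ, hNδ, by rw [hform δ]⟩
      have hele : (G + ∑ j, δ j * w j) ^ 2 = (|G| + r * ∑ j, u j * w j) ^ 2 := by
        rw [hsum, ← hsgnG]
        have hs2 : sgn ^ 2 = 1 := by rw [hsgn]; split_ifs <;> norm_num
        calc (G + sgn * r * ∑ j, u j * w j) ^ 2
            = sgn ^ 2 * (G + sgn * r * ∑ j, u j * w j) ^ 2 := by rw [hs2]; ring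
          _ = (sgn * G + sgn ^ 2 * (r * ∑ j, u j * w j)) ^ 2 := by ring
          _ = (sgn * G + r * ∑ j, u j * w j) ^ 2 := by rw [hs2]; ring
      exact hele ▸ le_csSup hSbdd hmem
    · rw [max_eq_right (le_of_not_ge hc), mul_zero, add_zero]
      have hmem : G ^ 2 ∈ S := ⟨0, by rw [N_zero hN_def]; exact hr, by rw [hform 0]; simp⟩
      rw [sq_abs]
      exact le_csSup hSbdd hmem
  obtain ⟨t, hmono, htend, htmem⟩ := exists_seq_tendsto_sSup (D_nonempty hN_def hN_smul hN_add w)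
    (D_bddAbove hN_def hN_smul hN_add w)
  have htend' : Tendsto (fun n => (|G| + r * max (t n) 0) ^ 2) atTop
      (nhds ((|G| + a) ^ 2)) := by
    have h1 : Tendsto (fun n => max (t n) 0) atTop (nhds (dualNorm N w)) := by
      have h := htend.max (tendsto_const_nhds (x := (0:ℝ)) (f := atTop))
      rw [show (sSup {t : ℝ | ∃ u : Fin d → ℝ, N u ≤ 1 ∧ t = ∑ j, u j * w j})
          = dualNorm N w from rfl, max_eq_left (dualNorm_nonneg hN_def hN_smul hN_add w)] at h
      exact h
    have h2 : Tendsto (fun n => |G| + r * max (t n) 0) atTop (nhds (|G| + a)) := by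
      rw [ha]
      exact tendsto_const_nhds.add (tendsto_const_nhds.mul h1)
    exact h2.pow 2
  show (|G| + a) ^ 2 ≤ sSup S
  exact le_of_tendsto htend' (Filter.Eventually.of_forall fun n => hmemS (t n) (htmem n))


end AdvHelper6
end AdvHelpers

/-- In the Gaussian generative model `x ∼ N(0, Σ)` (`Σ` positive definite),
`y = ⟨w₀, x⟩ + z` with independent `z ∼ N(0, σ²)`, for any norm `N` on `ℝ^d` with dual `N*`,
every `w ∈ ℝ^d` and `r ≥ 0`, the adversarial risk admits the exact formula
`E(w, r) = σ_w² + 2√(2/π) · r N*(w) · σ_w + r² (N*(w))²`,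
where `σ_w = √(σ² + ‖w − w₀‖_Σ²)` and `‖v‖_Σ = √(vᵀΣv)`. -/
theorem adversarial_risk_gaussian_exact_formula
    {d : ℕ} {Ω : Type*} [MeasurableSpace Ω] (μ : Measure Ω) [IsProbabilityMeasure μ]
    (Sig : Matrix (Fin d) (Fin d) ℝ) (hSig : Sig.PosDef)
    (σ : ℝ) (hσ : 0 ≤ σ)
    (x : Ω → Fin d → ℝ) (z : Ω → ℝ)
    (hx : ∀ v : Fin d → ℝ,
      Measure.map (fun ω => ∑ j, v j * x ω j) μ =
        gaussianReal 0 (Real.toNNReal (∑ i, ∑ j, v i * Sig i j * v j)))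
    (hz : Measure.map z μ = gaussianReal 0 (Real.toNNReal (σ ^ 2)))
    (hxz : IndepFun x z μ)
    (w₀ : Fin d → ℝ) (y : Ω → ℝ) (hy : ∀ ω, y ω = (∑ j, w₀ j * x ω j) + z ω)
    (N : (Fin d → ℝ) → ℝ)
    (hN_def : ∀ v : Fin d → ℝ, N v = 0 ↔ v = 0)
    (hN_smul : ∀ (a : ℝ) (v : Fin d → ℝ), N (a • v) = |a| * N v)
    (hN_add : ∀ u v : Fin d → ℝ, N (u + v) ≤ N u + N v)
    (w : Fin d → ℝ) (r : ℝ) (hr : 0 ≤ r) :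
    ∫ ω, advLoss N r w (x ω) (y ω) ∂μ =
      (Real.sqrt (σ ^ 2 + ∑ i, ∑ j, (w i - w₀ i) * Sig i j * (w j - w₀ j))) ^ 2 +
        2 * Real.sqrt (2 / Real.pi) * (r * dualNorm N w) *
          Real.sqrt (σ ^ 2 + ∑ i, ∑ j, (w i - w₀ i) * Sig i j * (w j - w₀ j)) +
        r ^ 2 * (dualNorm N w) ^ 2 := by
  classical
  have hq : 0 ≤ ∑ i, ∑ j, (w i - w₀ i) * Sig i j * (w j - w₀ j) := by
    have h := hSig.posSemidef.dotProduct_mulVec_nonneg (fun j => w j - w₀ j)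
    simpa [dotProduct, Matrix.mulVec, Finset.mul_sum, mul_assoc] using h
  set q : ℝ := ∑ i, ∑ j, (w i - w₀ i) * Sig i j * (w j - w₀ j) with hqdef
  set V : NNReal := Real.toNNReal q + Real.toNNReal (σ ^ 2) with hVdef
  have hVcoe : (V : ℝ) = σ ^ 2 + q := by
    rw [hVdef]
    push_cast [Real.coe_toNNReal _ hq, Real.coe_toNNReal _ (sq_nonneg σ)]
    ring
  set X : Ω → ℝ := fun ω => ∑ j, (w j - w₀ j) * x ω j with hX
  set Y : Ω → ℝ := fun ω => - z ω with hY
  have hzm : AEMeasurable z μ := aemeasurable_of_map_neZero (by rw [hz]; infer_instance)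
  have hmapX : Measure.map X μ = gaussianReal 0 (Real.toNNReal q) := by
    have h := hx (fun j => w j - w₀ j)
    simpa using h
  have hmapY : Measure.map Y μ = gaussianReal 0 (Real.toNNReal (σ ^ 2)) := by
    have h1 : Y = (fun t : ℝ => (-1) * t) ∘ z := by
      ext ω
      simp [hY]
    rw [h1, ← AEMeasurable.map_map_of_aemeasurable (by fun_prop) hzm, hz,
      ProbabilityTheory.gaussianReal_map_const_mul (-1)]
    congr 1
    · ring
    · ext
      norm_num
  have hindep : IndepFun X Y μ := by
    have hφ : Measurable fun p : Fin d → ℝ => ∑ j, (w j - w₀ j) * p j := by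
      exact Finset.measurable_sum _ fun j _ => (measurable_pi_apply j).const_mul _
    exact hxz.comp hφ measurable_neg
  have hmapG : Measure.map (fun ω => X ω + Y ω) μ = gaussianReal 0 V :=
    AdvHelper5.map_add_gaussianReal μ X Y hindep _ _ hmapX hmapY
  have hGm : AEMeasurable (fun ω => X ω + Y ω) μ :=
    aemeasurable_of_map_neZero (by rw [hmapG]; infer_instance)
  have hG : ∀ ω, ∑ j, w j * x ω j - y ω = X ω + Y ω := by
    intro ω
    rw [hy ω, hX, hY]
    simp only
    rw [show ∑ j, (w j - w₀ j) * x ω j = ∑ j, w j * x ω j - ∑ j, w₀ j * x ω j by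
      rw [← Finset.sum_sub_distrib]
      exact Finset.sum_congr rfl fun j _ => by ring]
    ring
  have ha0 : 0 ≤ r * dualNorm N w :=
    mul_nonneg hr (AdvHelper6.dualNorm_nonneg hN_def hN_smul hN_add w)
  calc ∫ ω, advLoss N r w (x ω) (y ω) ∂μ
      = ∫ ω, (|X ω + Y ω| + r * dualNorm N w) ^ 2 ∂μ := by
        refine integral_congr_ae (Filter.Eventually.of_forall fun ω => ?_)
        show advLoss N r w (x ω) (y ω) = (|X ω + Y ω| + r * dualNorm N w) ^ 2
        rw [AdvHelper6.advLoss_eq hN_def hN_smul hN_add w hr (x ω) (y ω), hG ω]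
    _ = ∫ t, (|t| + r * dualNorm N w) ^ 2 ∂(gaussianReal 0 V) := by
        rw [← hmapG, integral_map hGm]
        exact ((continuous_abs.add continuous_const).pow 2).aestronglyMeasurable
    _ = (V : ℝ) + (2 * (r * dualNorm N w) * (Real.sqrt (2 / Real.pi) * Real.sqrt V)
          + (r * dualNorm N w) ^ 2) := by
        have h1 : Integrable (fun t : ℝ => t ^ 2) (gaussianReal 0 V) :=
          AdvHelper3.integrable_sq_gaussianReal V
        have h2 : Integrable (fun t : ℝ => |t|) (gaussianReal 0 V) :=
          AdvHelper3.integrable_abs_gaussianReal V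
        have hpt : ∀ t : ℝ, (|t| + r * dualNorm N w) ^ 2
            = t ^ 2 + (2 * (r * dualNorm N w) * |t| + (r * dualNorm N w) ^ 2) := by
          intro t
          have hs := sq_abs t
          nlinarith [sq_abs t]
        simp only [hpt]
        have hI2 : Integrable (fun t : ℝ => 2 * (r * dualNorm N w) * |t|)
            (gaussianReal 0 V) := h2.const_mul _
        have hI3 : Integrable (fun _ : ℝ => (r * dualNorm N w) ^ 2)
            (gaussianReal 0 V) := integrable_const _
        have hI23 : Integrable (fun t : ℝ => 2 * (r * dualNorm N w) * |t|
            + (r * dualNorm N w) ^ 2) (gaussianReal 0 V) := hI2.add hI3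
        rw [integral_add h1 hI23, integral_add hI2 hI3, integral_const_mul,
          integral_const, AdvHelper3.integral_sq_gaussianReal,
          AdvHelper3.integral_abs_gaussianReal]
        simp
    _ = _ := by
        rw [hVcoe, Real.sq_sqrt (by positivity : (0:ℝ) ≤ σ ^ 2 + q)]
        rw [show Real.sqrt (σ ^ 2 + q) = Real.sqrt (σ ^ 2 + q) from rfl]
        ring
end

section
/- Suppose x ∈ ℝ^d is distributed as the centered multivariate Gaussian with positive-definite covariance matrix Σ, z is an independent real Gaussian with mean 0 and variance σ², and y = ⟨w_0, x⟩ + z. Let λ_max be the largest eigenvalue of Σ. If w ∈ ℝ^d has excess standard risk E(w) − σ² = ‖w − w_0‖_Σ² ≤ ε² with 0 ≤ ε ≤ ‖w_0‖_Σ, then for Euclidean-norm attacks of every strength r ≥ 0, E(w, r) ≥ σ² + r² (‖w_0‖_Σ − ε)² / λ_max. In particular, predictors with vanishing excess standard risk have adversarial risk growing at least proportionally to r² ‖w_0‖_Σ² / λ_max. -/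
open Finset MeasureTheory ProbabilityTheory

/-- The adversarial squared loss of the linear predictor `f_w(x) = ⟨w, x⟩` at `(x, y)`,
for Euclidean-norm attacks of strength `r`. -/
noncomputable def advLossEuclid {d : ℕ} (r : ℝ)
    (w : Fin d → ℝ) (x : Fin d → ℝ) (y : ℝ) : ℝ :=
  sSup {e : ℝ | ∃ δ : Fin d → ℝ, Real.sqrt (∑ j, δ j ^ 2) ≤ r ∧
    e = (∑ j, w j * (x j + δ j) - y) ^ 2}

/-- The quadratic form `vᵀ Σ v`, i.e. the squared Mahalanobis-type norm `‖v‖_Σ²`. -/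
def quadForm {d : ℕ} (Sig : Matrix (Fin d) (Fin d) ℝ) (v : Fin d → ℝ) : ℝ :=
  ∑ i, ∑ j, v i * Sig i j * v j

open Real
open scoped NNReal ENNReal



lemma integrable_sq_mul_exp {b : ℝ} (hb : 0 < b) :
    Integrable (fun x : ℝ => x ^ 2 * Real.exp (-b * x ^ 2)) := by
  have h := integrable_rpow_mul_exp_neg_mul_sq hb (s := 2) (by norm_num)
  have : ∀ x : ℝ, x ^ (2:ℝ) = x ^ (2:ℕ) := fun x => by
    rw [← Real.rpow_natCast x 2]; norm_num
  simpa [this] using h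

lemma integral_id_mul_exp {b : ℝ} (hb : 0 < b) :
    ∫ x : ℝ, x * Real.exp (-b * x ^ 2) = 0 := by
  have hderiv : ∀ x : ℝ, HasDerivAt (fun t => -(2*b)⁻¹ * Real.exp (-b * t ^ 2))
      (x * Real.exp (-b * x ^ 2)) x := by
    intro x
    have h1 : HasDerivAt (fun t : ℝ => -b * t ^ 2) (-b * (2 * x)) x := by
      simpa using ((hasDerivAt_pow 2 x).const_mul (-b))
    have := (h1.exp).const_mul (-(2*b)⁻¹)
    refine this.congr_deriv ?_
    field_simp
  exact integral_eq_zero_of_hasDerivAt_of_integrable hderiv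
    (integrable_mul_exp_neg_mul_sq hb)
    ((integrable_exp_neg_mul_sq hb).const_mul _)

lemma integral_sq_mul_exp {b : ℝ} (hb : 0 < b) :
    ∫ x : ℝ, x ^ 2 * Real.exp (-b * x ^ 2) = Real.sqrt (π / b) / (2 * b) := by
  have hderiv : ∀ x : ℝ, HasDerivAt (fun t : ℝ => t * Real.exp (-b * t ^ 2))
      (Real.exp (-b * x ^ 2) - 2 * b * (x ^ 2 * Real.exp (-b * x ^ 2))) x := by
    intro x
    have h1 : HasDerivAt (fun t : ℝ => -b * t ^ 2) (-b * (2 * x)) x := by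
      simpa using ((hasDerivAt_pow 2 x).const_mul (-b))
    have := (hasDerivAt_id x).mul h1.exp
    simp only [id] at this
    refine this.congr_deriv ?_
    ring
  have hint : Integrable (fun x : ℝ =>
      Real.exp (-b * x ^ 2) - 2 * b * (x ^ 2 * Real.exp (-b * x ^ 2))) :=
    (integrable_exp_neg_mul_sq hb).sub ((integrable_sq_mul_exp hb).const_mul _)
  have h0 := integral_eq_zero_of_hasDerivAt_of_integrable hderiv hint
    (integrable_mul_exp_neg_mul_sq hb)
  rw [integral_sub (integrable_exp_neg_mul_sq hb) ((integrable_sq_mul_exp hb).const_mul _),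
    MeasureTheory.integral_const_mul, integral_gaussian] at h0
  have hb' : (2:ℝ) * b ≠ 0 := by positivity
  field_simp at h0 ⊢
  linarith


-- generic: integral against gaussianReal via density
lemma integral_gaussianReal_eq {m : ℝ} {v : ℝ≥0} (hv : v ≠ 0) (g : ℝ → ℝ) :
    ∫ t, g t ∂(gaussianReal m v) = ∫ t, gaussianPDFReal m v t * g t := by
  rw [gaussianReal_of_var_ne_zero m hv]
  have hmeas : Measurable fun t => (gaussianPDFReal m v t).toNNReal :=
    (measurable_gaussianPDFReal m v).real_toNNReal
  have : (gaussianPDF m v) = fun t => ((gaussianPDFReal m v t).toNNReal : ℝ≥0∞) := by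
    funext t; rw [gaussianPDF_def]; rfl
  rw [this, integral_withDensity_eq_integral_smul hmeas]
  congr 1; funext t
  simp [NNReal.smul_def, Real.coe_toNNReal _ (gaussianPDFReal_nonneg m v t)]

lemma integrable_gaussianReal_of {m : ℝ} {v : ℝ≥0} (hv : v ≠ 0) (g : ℝ → ℝ)
    (hg : Integrable (fun t => gaussianPDFReal m v t * g t)) :
    Integrable g (gaussianReal m v) := by
  rw [gaussianReal_of_var_ne_zero m hv]
  have hmeas : Measurable (gaussianPDF m v) := measurable_gaussianPDF m v
  rw [integrable_withDensity_iff hmeas (by simp [gaussianPDF_def, ENNReal.ofReal_lt_top])]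
  refine hg.congr (Filter.Eventually.of_forall fun t => ?_)
  rw [gaussianPDF_def]
  simp [ENNReal.toReal_ofReal (gaussianPDFReal_nonneg m v t)]
  ring

lemma gaussianPDFReal_zero_eq {v : ℝ≥0} (hv : v ≠ 0) (t : ℝ) :
    gaussianPDFReal 0 v t = (Real.sqrt (2 * π * v))⁻¹ * rexp (-(2 * (v:ℝ))⁻¹ * t ^ 2) := by
  have hv' : (0:ℝ) < v := by positivity
  rw [gaussianPDFReal]
  congr 2
  rw [sub_zero, neg_div, div_eq_inv_mul, neg_mul]

lemma integrable_sq_gaussianReal (v : ℝ≥0) :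
    Integrable (fun t : ℝ => t ^ 2) (gaussianReal 0 v) := by
  rcases eq_or_ne v 0 with rfl | hv
  · rw [gaussianReal_zero_var]; exact (integrable_const _).congr (ae_eq_dirac _).symm
  · have hv' : (0:ℝ) < v := lt_of_le_of_ne (v.coe_nonneg) (by exact_mod_cast (Ne.symm hv))
    have hb : (0:ℝ) < (2 * (v:ℝ))⁻¹ := by positivity
    refine integrable_gaussianReal_of hv _ ?_
    have := ((integrable_sq_mul_exp hb).const_mul (Real.sqrt (2 * π * v))⁻¹)
    refine this.congr (Filter.Eventually.of_forall fun t => ?_)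
    simp only [gaussianPDFReal_zero_eq hv]
    ring

lemma integrable_id_gaussianReal (v : ℝ≥0) :
    Integrable (fun t : ℝ => t) (gaussianReal 0 v) := by
  rcases eq_or_ne v 0 with rfl | hv
  · rw [gaussianReal_zero_var]; exact (integrable_const _).congr (ae_eq_dirac _).symm
  · have hv' : (0:ℝ) < v := lt_of_le_of_ne (v.coe_nonneg) (by exact_mod_cast (Ne.symm hv))
    have hb : (0:ℝ) < (2 * (v:ℝ))⁻¹ := by positivity
    refine integrable_gaussianReal_of hv _ ?_
    have := ((integrable_mul_exp_neg_mul_sq hb).const_mul (Real.sqrt (2 * π * v))⁻¹)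
    refine this.congr (Filter.Eventually.of_forall fun t => ?_)
    simp only [gaussianPDFReal_zero_eq hv]
    ring

lemma integral_id_gaussianReal (v : ℝ≥0) :
    ∫ t, t ∂(gaussianReal 0 v) = 0 := by
  rcases eq_or_ne v 0 with rfl | hv
  · rw [gaussianReal_zero_var]; simp
  · have hv' : (0:ℝ) < v := lt_of_le_of_ne (v.coe_nonneg) (by exact_mod_cast (Ne.symm hv))
    have hb : (0:ℝ) < (2 * (v:ℝ))⁻¹ := by positivity
    rw [integral_gaussianReal_eq hv]
    have h1 : ∀ t : ℝ, gaussianPDFReal 0 v t * t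
        = (Real.sqrt (2 * π * v))⁻¹ * (t * rexp (-(2 * (v:ℝ))⁻¹ * t ^ 2)) := by
      intro t; rw [gaussianPDFReal_zero_eq hv]; ring
    simp_rw [h1]
    rw [MeasureTheory.integral_const_mul, integral_id_mul_exp hb, mul_zero]

lemma integral_sq_gaussianReal (v : ℝ≥0) :
    ∫ t, t ^ 2 ∂(gaussianReal 0 v) = v := by
  rcases eq_or_ne v 0 with rfl | hv
  · rw [gaussianReal_zero_var]; simp
  · have hv' : (0:ℝ) < v := lt_of_le_of_ne (v.coe_nonneg) (by exact_mod_cast (Ne.symm hv))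
    have hb : (0:ℝ) < (2 * (v:ℝ))⁻¹ := by positivity
    rw [integral_gaussianReal_eq hv]
    have h1 : ∀ t : ℝ, gaussianPDFReal 0 v t * t ^ 2
        = (Real.sqrt (2 * π * v))⁻¹ * (t ^ 2 * rexp (-(2 * (v:ℝ))⁻¹ * t ^ 2)) := by
      intro t; rw [gaussianPDFReal_zero_eq hv]; ring
    simp_rw [h1]
    rw [MeasureTheory.integral_const_mul, integral_sq_mul_exp hb,
      show π / (2 * (v:ℝ))⁻¹ = 2 * π * v by field_simp]
    have hX : (0:ℝ) < Real.sqrt (2 * π * v) := Real.sqrt_pos.2 (by positivity)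
    field_simp

lemma quadForm_eq_dot {d : ℕ} (Sig : Matrix (Fin d) (Fin d) ℝ) (v : Fin d → ℝ) :
    quadForm Sig v = dotProduct v (Sig.mulVec v) := by
  unfold quadForm dotProduct Matrix.mulVec dotProduct
  refine Finset.sum_congr rfl fun i _ => ?_
  rw [Finset.mul_sum]
  exact Finset.sum_congr rfl fun j _ => by ring

lemma quadForm_nonneg {d : ℕ} {Sig : Matrix (Fin d) (Fin d) ℝ} (hSig : Sig.PosSemidef)
    (v : Fin d → ℝ) : 0 ≤ quadForm Sig v := by
  rw [quadForm_eq_dot]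
  simpa using hSig.dotProduct_mulVec_nonneg v

open scoped MatrixOrder in
lemma Matrix.PosSemidef.exists_sqrt_aux {d : ℕ} {Sig : Matrix (Fin d) (Fin d) ℝ}
    (hSig : Sig.PosSemidef) : ∃ X : Matrix (Fin d) (Fin d) ℝ, X.IsHermitian ∧ X * X = Sig := by
  obtain ⟨X, hX, -, h⟩ := CFC.exists_sqrt_of_isSelfAdjoint_of_quasispectrumRestricts hSig.1
    (QuasispectrumRestricts.nnreal_of_nonneg hSig.nonneg)
  exact ⟨X, hX, h⟩

noncomputable def Matrix.PosSemidef.sqrt {d : ℕ} {Sig : Matrix (Fin d) (Fin d) ℝ}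
    (hSig : Sig.PosSemidef) : Matrix (Fin d) (Fin d) ℝ :=
  Classical.choose hSig.exists_sqrt_aux

lemma Matrix.PosSemidef.sqrt_isHermitian {d : ℕ} {Sig : Matrix (Fin d) (Fin d) ℝ}
    (hSig : Sig.PosSemidef) : hSig.sqrt.IsHermitian :=
  (Classical.choose_spec hSig.exists_sqrt_aux).1

lemma Matrix.PosSemidef.sqrt_mul_self {d : ℕ} {Sig : Matrix (Fin d) (Fin d) ℝ}
    (hSig : Sig.PosSemidef) : hSig.sqrt * hSig.sqrt = Sig :=
  (Classical.choose_spec hSig.exists_sqrt_aux).2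

-- quadForm as squared norm of sqrt
lemma quadForm_sqrt {d : ℕ} {Sig : Matrix (Fin d) (Fin d) ℝ} (hSig : Sig.PosSemidef)
    (v : Fin d → ℝ) :
    quadForm Sig v = ∑ j, (hSig.sqrt.mulVec v j) ^ 2 := by
  rw [quadForm_eq_dot]
  conv_lhs => rw [← hSig.sqrt_mul_self]
  rw [← Matrix.mulVec_mulVec, Matrix.dotProduct_mulVec]
  have hsym : hSig.sqrt.transpose = hSig.sqrt := by
    rw [← Matrix.conjTranspose_eq_transpose_of_trivial]
    exact hSig.sqrt_isHermitian
  rw [← Matrix.mulVec_transpose, hsym]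
  unfold dotProduct
  exact Finset.sum_congr rfl fun j _ => (sq _).symm

lemma sqrt_quadForm_triangle {d : ℕ} {Sig : Matrix (Fin d) (Fin d) ℝ} (hSig : Sig.PosSemidef)
    (u v : Fin d → ℝ) :
    Real.sqrt (quadForm Sig (u + v)) ≤
      Real.sqrt (quadForm Sig u) + Real.sqrt (quadForm Sig v) := by
  set f := hSig.sqrt.mulVec u
  set g := hSig.sqrt.mulVec v
  have hfg : hSig.sqrt.mulVec (u + v) = fun j => f j + g j := by
    funext j; simp [f, g, Matrix.mulVec_add]
  rw [quadForm_sqrt hSig, quadForm_sqrt hSig, quadForm_sqrt hSig, hfg]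
  have hY : (0:ℝ) ≤ ∑ j, f j ^ 2 := Finset.sum_nonneg fun j _ => sq_nonneg _
  have hZ : (0:ℝ) ≤ ∑ j, g j ^ 2 := Finset.sum_nonneg fun j _ => sq_nonneg _
  have hCS : (∑ j, f j * g j) ≤ Real.sqrt (∑ j, f j ^ 2) * Real.sqrt (∑ j, g j ^ 2) := by
    have h1 : (∑ j, f j * g j) ^ 2 ≤ (∑ j, f j ^ 2) * ∑ j, g j ^ 2 :=
      Finset.sum_mul_sq_le_sq_mul_sq _ _ _
    calc (∑ j, f j * g j) ≤ |∑ j, f j * g j| := le_abs_self _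
      _ = Real.sqrt ((∑ j, f j * g j) ^ 2) := (Real.sqrt_sq_eq_abs _).symm
      _ ≤ Real.sqrt ((∑ j, f j ^ 2) * ∑ j, g j ^ 2) := Real.sqrt_le_sqrt h1
      _ = _ := Real.sqrt_mul hY _
  have hexp : ∑ j, (f j + g j) ^ 2
      ≤ (Real.sqrt (∑ j, f j ^ 2) + Real.sqrt (∑ j, g j ^ 2)) ^ 2 := by
    have e1 : ∑ j, (f j + g j) ^ 2 = (∑ j, f j ^ 2) + 2 * (∑ j, f j * g j) + ∑ j, g j ^ 2 := by
      rw [Finset.mul_sum, ← Finset.sum_add_distrib, ← Finset.sum_add_distrib]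
      exact Finset.sum_congr rfl fun j _ => by ring
    have e2 : (Real.sqrt (∑ j, f j ^ 2) + Real.sqrt (∑ j, g j ^ 2)) ^ 2
        = (∑ j, f j ^ 2) + 2 * (Real.sqrt (∑ j, f j ^ 2) * Real.sqrt (∑ j, g j ^ 2))
          + ∑ j, g j ^ 2 := by
      rw [add_sq, Real.sq_sqrt hY, Real.sq_sqrt hZ]; ring
    rw [e1, e2]; linarith
  calc Real.sqrt (∑ j, (f j + g j) ^ 2)
      ≤ Real.sqrt ((Real.sqrt (∑ j, f j ^ 2) + Real.sqrt (∑ j, g j ^ 2)) ^ 2) :=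
        Real.sqrt_le_sqrt hexp
    _ = _ := Real.sqrt_sq (by positivity)

lemma quadForm_le_lamMax {d : ℕ} {Sig : Matrix (Fin d) (Fin d) ℝ} (hSig : Sig.IsHermitian)
    {lamMax : ℝ}
    (hub : ∀ t ∈ {t : ℝ | ∃ v : Fin d → ℝ, v ≠ 0 ∧ Sig.mulVec v = t • v}, t ≤ lamMax)
    (v : Fin d → ℝ) :
    quadForm Sig v ≤ lamMax * ∑ j, v j ^ 2 := by
  classical
  set b := hSig.eigenvectorBasis with hb
  set lam := hSig.eigenvalues with hlamdef
  set v' : EuclideanSpace ℝ (Fin d) := (WithLp.equiv 2 (Fin d → ℝ)).symm v with hv'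
  have hvv : (WithLp.equiv 2 (Fin d → ℝ)) v' = v := rfl
  have hsym : (Matrix.toEuclideanLin Sig).IsSymmetric :=
    (Matrix.isHermitian_iff_isSymmetric).1 hSig
  have hTb : ∀ i, Matrix.toEuclideanLin Sig (b i) = lam i • b i := by
    intro i
    rw [Matrix.toEuclideanLin_apply, hSig.mulVec_eigenvectorBasis]
    rfl
  have hTv : Matrix.toEuclideanLin Sig v' =
      (WithLp.equiv 2 (Fin d → ℝ)).symm (Sig.mulVec v) := by
    rw [Matrix.toEuclideanLin_apply]; rfl
  have hquad : quadForm Sig v = (inner ℝ v' (Matrix.toEuclideanLin Sig v') : ℝ) := by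
    rw [hTv, quadForm_eq_dot, PiLp.inner_apply]
    simp [hv', dotProduct, mul_comm]
  have hnorm : ∑ j, v j ^ 2 = (inner ℝ v' v' : ℝ) := by
    rw [PiLp.inner_apply]
    exact Finset.sum_congr rfl fun j _ => (sq _)
  have hlam_le : ∀ i, lam i ≤ lamMax := by
    intro i
    refine hub _ ⟨(WithLp.equiv 2 (Fin d → ℝ)) (b i), ?_, hSig.mulVec_eigenvectorBasis i⟩
    intro h0
    have : b i = 0 := by
      apply (WithLp.equiv 2 (Fin d → ℝ)).injective
      simpa using h0
    exact b.orthonormal.ne_zero i this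
  have hexp1 : (inner ℝ v' (Matrix.toEuclideanLin Sig v') : ℝ)
      = ∑ i, lam i * (inner ℝ (b i) v' : ℝ) ^ 2 := by
    rw [← b.sum_inner_mul_inner v' (Matrix.toEuclideanLin Sig v')]
    refine Finset.sum_congr rfl fun i _ => ?_
    rw [← hsym (b i) v', hTb i, inner_smul_left]
    rw [real_inner_comm v' (b i)]
    simp [RCLike.conj_to_real]
    ring
  have hexp2 : (inner ℝ v' v' : ℝ) = ∑ i, (inner ℝ (b i) v' : ℝ) ^ 2 := by
    rw [← b.sum_inner_mul_inner v' v']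
    refine Finset.sum_congr rfl fun i _ => ?_
    rw [real_inner_comm v' (b i)]
    ring
  rw [hquad, hnorm, hexp1, hexp2, Finset.mul_sum]
  exact Finset.sum_le_sum fun i _ =>
    mul_le_mul_of_nonneg_right (hlam_le i) (sq_nonneg _)

lemma lamMax_pos {d : ℕ} {Sig : Matrix (Fin d) (Fin d) ℝ} (hSig : Sig.PosDef)
    {lamMax : ℝ}
    (hmem : lamMax ∈ {t : ℝ | ∃ v : Fin d → ℝ, v ≠ 0 ∧ Sig.mulVec v = t • v}) :
    0 < lamMax := by
  obtain ⟨v0, hv0, heig⟩ := hmem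
  have hpos : 0 < dotProduct (star v0) (Sig.mulVec v0) := by
    simpa using hSig.dotProduct_mulVec_pos hv0
  rw [heig] at hpos
  have hdot : dotProduct (star v0) (lamMax • v0) = lamMax * ∑ j, v0 j ^ 2 := by
    unfold dotProduct
    rw [Finset.mul_sum]
    exact Finset.sum_congr rfl fun j _ => by
      simp [star_trivial]
      ring
  rw [hdot] at hpos
  have hsum : 0 < ∑ j, v0 j ^ 2 := by
    rcases Function.ne_iff.1 hv0 with ⟨j, hj⟩
    have hj' : v0 j ≠ 0 := by simpa using hj
    have h2 : 0 < v0 j ^ 2 := by positivity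
    exact lt_of_lt_of_le h2 (Finset.single_le_sum (f := fun j => v0 j ^ 2)
      (fun i _ => sq_nonneg _) (Finset.mem_univ j))
  nlinarith [hpos, hsum]

lemma advLossEuclid_eq {d : ℕ} {r : ℝ} (hr : 0 ≤ r) (w x : Fin d → ℝ) (y : ℝ) :
    advLossEuclid r w x y
      = (|∑ j, w j * x j - y| + r * Real.sqrt (∑ j, w j ^ 2)) ^ 2 := by
  set a := ∑ j, w j * x j - y with ha
  set W := Real.sqrt (∑ j, w j ^ 2) with hW
  have hW0 : 0 ≤ W := Real.sqrt_nonneg _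
  have key : ∀ δ : Fin d → ℝ, ∑ j, w j * (x j + δ j) - y = a + ∑ j, w j * δ j := by
    intro δ; simp_rw [mul_add, Finset.sum_add_distrib]; ring
  have hgt : IsGreatest {e : ℝ | ∃ δ : Fin d → ℝ, Real.sqrt (∑ j, δ j ^ 2) ≤ r ∧
      e = (∑ j, w j * (x j + δ j) - y) ^ 2} ((|a| + r * W) ^ 2) := by
    constructor
    · -- membership
      by_cases hWz : W = 0
      · refine ⟨0, by simpa using hr, ?_⟩
        rw [key]
        simp [hWz, sq_abs]
      · have hWpos : 0 < W := lt_of_le_of_ne hW0 (Ne.symm hWz)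
        set s : ℝ := if 0 ≤ a then 1 else -1 with hs
        refine ⟨fun j => (s * r / W) * w j, ?_, ?_⟩
        · have hsum : ∑ j, ((s * r / W) * w j) ^ 2 = (s * r / W) ^ 2 * ∑ j, w j ^ 2 := by
            rw [Finset.mul_sum]; exact Finset.sum_congr rfl fun j _ => by ring
          rw [hsum, Real.sqrt_mul (sq_nonneg _), Real.sqrt_sq_eq_abs, ← hW,
            abs_div, abs_mul]
          have hsabs : |s| = 1 := by
            rcases le_or_gt 0 a with h|h
            · simp [hs, h]
            · simp [hs, not_le.2 h]
          rw [hsabs, one_mul, abs_of_nonneg hr, abs_of_pos hWpos]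
          rw [div_mul_cancel₀ _ (ne_of_gt hWpos)]
        · rw [key]
          have hsum : ∑ j, w j * ((s * r / W) * w j) = (s * r / W) * ∑ j, w j ^ 2 := by
            rw [Finset.mul_sum]; exact Finset.sum_congr rfl fun j _ => by ring
          have hWsq : ∑ j, w j ^ 2 = W ^ 2 := by
            rw [hW, Real.sq_sqrt (Finset.sum_nonneg fun j _ => sq_nonneg _)]
          rw [hsum, hWsq]
          have : (s * r / W) * W ^ 2 = s * (r * W) := by field_simp
          rw [this]
          rcases le_or_gt 0 a with h|h
          · rw [hs, if_pos h, one_mul, abs_of_nonneg h]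
          · rw [hs, if_neg (not_le.2 h), abs_of_neg h, neg_one_mul, ← sub_eq_add_neg]
            ring
    · -- upper bound
      rintro e ⟨δ, hδ, rfl⟩
      rw [key]
      have hCS : (∑ j, w j * δ j) ^ 2 ≤ (∑ j, w j ^ 2) * ∑ j, δ j ^ 2 :=
        Finset.sum_mul_sq_le_sq_mul_sq _ _ _
      have habs : |∑ j, w j * δ j| ≤ r * W := by
        rw [← Real.sqrt_sq_eq_abs]
        calc Real.sqrt ((∑ j, w j * δ j) ^ 2)
            ≤ Real.sqrt ((∑ j, w j ^ 2) * ∑ j, δ j ^ 2) := Real.sqrt_le_sqrt hCS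
          _ = W * Real.sqrt (∑ j, δ j ^ 2) :=
              Real.sqrt_mul (Finset.sum_nonneg fun j _ => sq_nonneg _) _
          _ ≤ W * r := by
              exact mul_le_mul_of_nonneg_left hδ hW0
          _ = r * W := mul_comm _ _
      have h1 : |a + ∑ j, w j * δ j| ≤ |a| + r * W :=
        (abs_add_le _ _).trans (by linarith)
      calc (a + ∑ j, w j * δ j) ^ 2 = |a + ∑ j, w j * δ j| ^ 2 := (sq_abs _).symm
        _ ≤ (|a| + r * W) ^ 2 := by
            apply pow_le_pow_left₀ (abs_nonneg _) h1
  exact hgt.csSup_eq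

lemma quadForm_neg {d : ℕ} (Sig : Matrix (Fin d) (Fin d) ℝ) (v : Fin d → ℝ) :
    quadForm Sig (-v) = quadForm Sig v := by
  unfold quadForm
  refine Finset.sum_congr rfl fun i _ => Finset.sum_congr rfl fun j _ => ?_
  simp only [Pi.neg_apply]
  ring



/-- In the Gaussian generative model `x ∼ N(0, Σ)` (`Σ` positive definite),
`y = ⟨w₀, x⟩ + z` with independent `z ∼ N(0, σ²)`, let `λ_max` be the largest eigenvalue of
`Σ`. If `w` has excess standard risk `E(w) − σ² = ‖w − w₀‖_Σ² ≤ ε²` with `0 ≤ ε ≤ ‖w₀‖_Σ`,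
then for Euclidean-norm attacks of every strength `r ≥ 0`,
`E(w, r) ≥ σ² + r² (‖w₀‖_Σ − ε)² / λ_max`. -/
theorem adversarial_risk_lower_bound_near_consistent
    {d : ℕ} {Ω : Type*} [MeasurableSpace Ω] (μ : Measure Ω) [IsProbabilityMeasure μ]
    (Sig : Matrix (Fin d) (Fin d) ℝ) (hSig : Sig.PosDef)
    (σ : ℝ) (hσ : 0 ≤ σ)
    (x : Ω → Fin d → ℝ) (z : Ω → ℝ)
    (hx : ∀ v : Fin d → ℝ,
      Measure.map (fun ω => ∑ j, v j * x ω j) μ =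
        gaussianReal 0 (Real.toNNReal (quadForm Sig v)))
    (hz : Measure.map z μ = gaussianReal 0 (Real.toNNReal (σ ^ 2)))
    (hxz : IndepFun x z μ)
    (w₀ : Fin d → ℝ) (y : Ω → ℝ) (hy : ∀ ω, y ω = (∑ j, w₀ j * x ω j) + z ω)
    (lamMax : ℝ)
    (hlam : IsGreatest {t : ℝ | ∃ v : Fin d → ℝ, v ≠ 0 ∧ Sig.mulVec v = t • v} lamMax)
    (w : Fin d → ℝ) (ε : ℝ) (hε0 : 0 ≤ ε) (hεw : ε ≤ Real.sqrt (quadForm Sig w₀))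
    (hw : quadForm Sig (w - w₀) ≤ ε ^ 2) :
    ∀ r : ℝ, 0 ≤ r →
      σ ^ 2 + r ^ 2 * (Real.sqrt (quadForm Sig w₀) - ε) ^ 2 / lamMax ≤
        ∫ ω, advLossEuclid r w (x ω) (y ω) ∂μ := by
  
  intro r hr
  classical
  set u : Ω → ℝ := fun ω => ∑ j, (w - w₀) j * x ω j with hu_def
  set a : Ω → ℝ := fun ω => ∑ j, w j * x ω j - y ω with ha_def
  have ha_eq : ∀ ω, a ω = u ω - z ω := by
    intro ω
    have hsplit : ∑ j, (w j - w₀ j) * x ω j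
        = (∑ j, w j * x ω j) - ∑ j, w₀ j * x ω j := by
      rw [← Finset.sum_sub_distrib]
      exact Finset.sum_congr rfl fun j _ => by ring
    simp only [ha_def, hu_def, hy ω, Pi.sub_apply, hsplit]
    ring
  have hu_law := hx (w - w₀)
  have hu_aem : AEMeasurable u μ := by
    by_contra h
    rw [Measure.map_of_not_aemeasurable h] at hu_law
    exact (IsProbabilityMeasure.ne_zero
      (gaussianReal 0 (Real.toNNReal (quadForm Sig (w - w₀))))) hu_law.symm
  have hz_aem : AEMeasurable z μ := by
    by_contra h
    rw [Measure.map_of_not_aemeasurable h] at hz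
    exact (IsProbabilityMeasure.ne_zero (gaussianReal 0 (Real.toNNReal (σ ^ 2)))) hz.symm
  have hmem_of_law : ∀ (f : Ω → ℝ) (v : ℝ≥0), AEMeasurable f μ →
      Measure.map f μ = gaussianReal 0 v → MemLp f 2 μ := by
    intro f v hf hlaw
    have h1 : MemLp (id : ℝ → ℝ) 2 (Measure.map f μ) := by
      rw [hlaw]
      exact (memLp_two_iff_integrable_sq aestronglyMeasurable_id).2
        (integrable_sq_gaussianReal v)
    have := (memLp_map_measure_iff
      (aestronglyMeasurable_id (μ := Measure.map f μ)) hf).1 h1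
    simpa [Function.comp] using this
  have hu2 : MemLp u 2 μ := hmem_of_law u _ hu_aem hu_law
  have hz2 : MemLp z 2 μ := hmem_of_law z _ hz_aem hz
  have ha_fun : a = u - z := funext ha_eq
  have ha2 : MemLp a 2 μ := by rw [ha_fun]; exact hu2.sub hz2
  -- integral facts
  have hz_mean : ∫ ω, z ω ∂μ = 0 := by
    have h := integral_map hz_aem (aestronglyMeasurable_id (μ := Measure.map z μ))
    simp only [id] at h
    rw [← h, hz, _root_.integral_id_gaussianReal]
  have hz_sq : ∫ ω, z ω ^ 2 ∂μ = σ ^ 2 := by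
    have hg : AEStronglyMeasurable (fun t : ℝ => t ^ 2) (Measure.map z μ) :=
      (continuous_pow 2).aestronglyMeasurable
    have h := integral_map hz_aem hg
    rw [← h, hz, integral_sq_gaussianReal, Real.coe_toNNReal _ (sq_nonneg σ)]
  have huz_indep : IndepFun u z μ := by
    have hf : Measurable (fun p : Fin d → ℝ => ∑ j, (w - w₀) j * p j) := by
      apply Finset.measurable_sum
      intro j _
      exact (measurable_pi_apply j).const_mul _
    exact hxz.comp hf measurable_id
  have hu_int : Integrable u μ := hu2.integrable one_le_two
  have hz_int : Integrable z μ := hz2.integrable one_le_two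
  have huz_int : Integrable (fun ω => u ω * z ω) μ :=
    huz_indep.integrable_mul hu_int hz_int
  have huz_val : ∫ ω, u ω * z ω ∂μ = 0 := by
    have h := huz_indep.integral_mul_eq_mul_integral hu2.1 hz2.1
    have h2 : ∫ ω, u ω * z ω ∂μ = ∫ ω, (u * z) ω ∂μ := rfl
    rw [h2]
    rw [show ∫ ω, (u * z) ω ∂μ = integral μ (u * z) from rfl, h, hz_mean, mul_zero]
  have hu_sq_int : Integrable (fun ω => u ω ^ 2) μ := hu2.integrable_sq
  have hz_sq_int : Integrable (fun ω => z ω ^ 2) μ := hz2.integrable_sq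
  have ha_sq_int : Integrable (fun ω => a ω ^ 2) μ := ha2.integrable_sq
  have ha_abs_int : Integrable (fun ω => |a ω|) μ := (ha2.integrable one_le_two).abs
  have ha_sq_ge : σ ^ 2 ≤ ∫ ω, a ω ^ 2 ∂μ := by
    have hexp : ∀ ω, a ω ^ 2 = u ω ^ 2 - 2 * (u ω * z ω) + z ω ^ 2 := by
      intro ω; rw [ha_eq]; ring
    have hval : ∫ ω, a ω ^ 2 ∂μ
        = (∫ ω, u ω ^ 2 ∂μ) - 2 * (∫ ω, u ω * z ω ∂μ) + ∫ ω, z ω ^ 2 ∂μ := by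
      rw [integral_congr_ae (Filter.Eventually.of_forall hexp)]
      have hsub : Integrable (fun ω => u ω ^ 2 - 2 * (u ω * z ω)) μ :=
        hu_sq_int.sub (huz_int.const_mul 2)
      rw [integral_add hsub hz_sq_int,
        integral_sub hu_sq_int (huz_int.const_mul 2), MeasureTheory.integral_const_mul]
    have hu_sq_nonneg : 0 ≤ ∫ ω, u ω ^ 2 ∂μ := integral_nonneg fun ω => sq_nonneg _
    rw [hval, huz_val, hz_sq]
    linarith
  -- pointwise identity for the adversarial loss
  set c : ℝ := r * Real.sqrt (∑ j, w j ^ 2) with hc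
  have hc0 : 0 ≤ c := mul_nonneg hr (Real.sqrt_nonneg _)
  have hpt : ∀ ω, advLossEuclid r w (x ω) (y ω) = a ω ^ 2 + 2 * c * |a ω| + c ^ 2 := by
    intro ω
    rw [advLossEuclid_eq hr w (x ω) (y ω), ← hc, add_sq, sq_abs]
    ring
  have hintegral : ∫ ω, advLossEuclid r w (x ω) (y ω) ∂μ
      = (∫ ω, a ω ^ 2 ∂μ) + 2 * c * (∫ ω, |a ω| ∂μ) + c ^ 2 := by
    rw [integral_congr_ae (Filter.Eventually.of_forall hpt)]
    have hadd : Integrable (fun ω => a ω ^ 2 + 2 * c * |a ω|) μ :=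
      ha_sq_int.add (ha_abs_int.const_mul (2 * c))
    rw [integral_add hadd (integrable_const _),
      integral_add ha_sq_int (ha_abs_int.const_mul (2 * c)),
      MeasureTheory.integral_const_mul, integral_const]
    simp
  have habs_nonneg : 0 ≤ ∫ ω, |a ω| ∂μ := integral_nonneg fun ω => abs_nonneg _
  -- lower bound c²
  have hPS := hSig.posSemidef
  have hQw : (Real.sqrt (quadForm Sig w₀) - ε) ^ 2 ≤ quadForm Sig w := by
    have htr : Real.sqrt (quadForm Sig w₀)
        ≤ Real.sqrt (quadForm Sig w) + Real.sqrt (quadForm Sig (w₀ - w)) := by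
      have h := sqrt_quadForm_triangle hPS w (w₀ - w)
      rw [show w + (w₀ - w) = w₀ by abel] at h
      exact h
    have hqe : quadForm Sig (w₀ - w) = quadForm Sig (w - w₀) := by
      rw [show w₀ - w = -(w - w₀) by abel, quadForm_neg]
    have hle : Real.sqrt (quadForm Sig (w₀ - w)) ≤ ε := by
      rw [hqe]
      calc Real.sqrt (quadForm Sig (w - w₀)) ≤ Real.sqrt (ε ^ 2) := Real.sqrt_le_sqrt hw
        _ = ε := Real.sqrt_sq hε0
    have h1 : Real.sqrt (quadForm Sig w₀) - ε ≤ Real.sqrt (quadForm Sig w) := by linarith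
    have h2 : 0 ≤ Real.sqrt (quadForm Sig w₀) - ε := sub_nonneg.2 hεw
    calc (Real.sqrt (quadForm Sig w₀) - ε) ^ 2
        ≤ Real.sqrt (quadForm Sig w) ^ 2 := by
          apply pow_le_pow_left₀ h2 h1
      _ = quadForm Sig w := Real.sq_sqrt (quadForm_nonneg hPS w)
  have hQl : quadForm Sig w ≤ lamMax * ∑ j, w j ^ 2 := quadForm_le_lamMax hSig.1 hlam.2 w
  have hlpos : 0 < lamMax := lamMax_pos hSig hlam.1
  have hc_ge : r ^ 2 * (Real.sqrt (quadForm Sig w₀) - ε) ^ 2 / lamMax ≤ c ^ 2 := by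
    have h1 : (Real.sqrt (quadForm Sig w₀) - ε) ^ 2 / lamMax ≤ ∑ j, w j ^ 2 := by
      rw [div_le_iff₀ hlpos]
      calc (Real.sqrt (quadForm Sig w₀) - ε) ^ 2 ≤ quadForm Sig w := hQw
        _ ≤ lamMax * ∑ j, w j ^ 2 := hQl
        _ = (∑ j, w j ^ 2) * lamMax := mul_comm _ _
    have hcsq : c ^ 2 = r ^ 2 * ∑ j, w j ^ 2 := by
      rw [hc, mul_pow, Real.sq_sqrt (Finset.sum_nonneg fun j _ => sq_nonneg _)]
    rw [hcsq, mul_div_assoc]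
    exact mul_le_mul_of_nonneg_left h1 (sq_nonneg r)
  rw [hintegral]
  nlinarith [mul_nonneg (mul_nonneg (by norm_num : (0:ℝ) ≤ 2) hc0) habs_nonneg]
end

section
/- Suppose x ∈ ℝ^d is distributed as the standard Gaussian N(0, I_d), z is an independent real Gaussian with mean 0 and variance σ², and y = ⟨w_0, x⟩ + z where w_0 = (1, …, 1, 0, …, 0) has exactly s nonzero coordinates equal to 1 (1 ≤ s ≤ d, d ≥ 2). Set the ℓ∞-attack strength r = √(log d / s). Then every w ∈ ℝ^d with ‖w − w_0‖₂ ≤ ε for some 0 ≤ ε ≤ √s satisfies E(w, r) ≥ σ² + (1 − ε/√s)² · log d. In particular, any estimator whose Euclidean estimation error ε is o(√s) has adversarial risk at least (1 − o(1))(σ² + log d) under this imperceptible ℓ∞ attack. -/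
open Finset MeasureTheory ProbabilityTheory

/-- The adversarial squared loss of the linear predictor `f_w(x) = ⟨w, x⟩` at `(x, y)`,
for `ℓ∞`-norm attacks of strength `r`. -/
noncomputable def advLossLinf {d : ℕ} (r : ℝ)
    (w : Fin d → ℝ) (x : Fin d → ℝ) (y : ℝ) : ℝ :=
  sSup {e : ℝ | ∃ δ : Fin d → ℝ, (∀ j, |δ j| ≤ r) ∧
    e = (∑ j, w j * (x j + δ j) - y) ^ 2}


open MeasureTheory ProbabilityTheory Real Set
open scoped NNReal ENNReal

lemma gauss_pdf_rw (v : ℝ≥0) (hv : v ≠ 0) (g : ℝ → ℝ) :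
    ∫ x, g x ∂(gaussianReal 0 v) = ∫ x, gaussianPDFReal 0 v x * g x := by
  rw [gaussianReal_of_var_ne_zero 0 hv]
  have : (gaussianPDF 0 v) = fun x => ((gaussianPDFReal 0 v x).toNNReal : ℝ≥0∞) := by
    ext x; rfl
  rw [this, integral_withDensity_eq_integral_smul
    ((measurable_gaussianPDFReal 0 v).real_toNNReal) g]
  congr 1; ext x
  rw [NNReal.smul_def, smul_eq_mul, Real.coe_toNNReal _ (gaussianPDFReal_nonneg 0 v x)]

lemma gauss_integrable_iff (v : ℝ≥0) (hv : v ≠ 0) (g : ℝ → ℝ) :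
    Integrable g (gaussianReal 0 v) ↔
      Integrable (fun x => gaussianPDFReal 0 v x * g x) := by
  rw [gaussianReal_of_var_ne_zero 0 hv]
  have : (gaussianPDF 0 v) = fun x => ((gaussianPDFReal 0 v x).toNNReal : ℝ≥0∞) := by
    ext x; rfl
  rw [this, integrable_withDensity_iff_integrable_smul
    ((measurable_gaussianPDFReal 0 v).real_toNNReal)]
  constructor <;> intro h <;> refine h.congr (Filter.Eventually.of_forall fun x => ?_) <;>
    simp only [NNReal.smul_def, smul_eq_mul,
      Real.coe_toNNReal _ (gaussianPDFReal_nonneg 0 v x)]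

lemma gauss_integrable_sq (v : ℝ≥0) :
    Integrable (fun x : ℝ => x ^ 2) (gaussianReal 0 v) := by
  by_cases hv : v = 0
  · simp only [hv, gaussianReal_zero_var]
    refine ⟨(measurable_id.pow_const 2).aestronglyMeasurable, ?_⟩
    rw [HasFiniteIntegral, lintegral_dirac' _ (by measurability)]
    simp
  · rw [gauss_integrable_iff v hv]
    have hvpos : (0:ℝ) < v := lt_of_le_of_ne v.coe_nonneg (by exact_mod_cast (Ne.symm hv))
    have hb : (0:ℝ) < (2 * (v:ℝ))⁻¹ := by positivity
    have h := (integrable_rpow_mul_exp_neg_mul_sq hb (s := 2) (by norm_num)).const_mul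
      ((√(2 * π * v))⁻¹)
    refine h.congr (Filter.Eventually.of_forall fun x => ?_)
    simp only [gaussianPDFReal]
    have : x ^ (2:ℝ) = x ^ (2:ℕ) := by
      rw [← Real.rpow_natCast x 2]; norm_num
    rw [this]
    have : -(2 * (v:ℝ))⁻¹ * x ^ 2 = -(x - 0) ^ 2 / (2 * v) := by
      field_simp; ring
    rw [this]; ring

lemma gauss_memLp2 (v : ℝ≥0) : MemLp id 2 (gaussianReal 0 v) :=
  (memLp_two_iff_integrable_sq aestronglyMeasurable_id).mpr (gauss_integrable_sq v)

lemma gauss_integrable_id (v : ℝ≥0) : Integrable id (gaussianReal 0 v) :=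
  (gauss_memLp2 v).integrable one_le_two

lemma gauss_integral_id (v : ℝ≥0) : ∫ x, x ∂(gaussianReal 0 v) = 0 := by
  have hmap := gaussianReal_map_const_mul (μ := 0) (v := v) (-1)
  rw [mul_zero] at hmap
  have hmap' : Measure.map (fun x => (-1:ℝ) * x) (gaussianReal 0 v) = gaussianReal 0 v := by
    rw [hmap]
    congr 1
    apply NNReal.coe_injective
    push_cast
    norm_num
  have h1 := MeasureTheory.integral_map (μ := gaussianReal 0 v) (φ := fun x : ℝ => (-1:ℝ) * x) (f := fun x : ℝ => x)
    (measurable_const_mul (-1)).aemeasurable measurable_id.aestronglyMeasurable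
  rw [hmap'] at h1
  have h2 : ∫ x : ℝ, (-1:ℝ) * x ∂(gaussianReal 0 v) = -∫ x : ℝ, x ∂(gaussianReal 0 v) := by
    simp_rw [neg_one_mul]
    exact integral_neg (f := fun x : ℝ => x)
  rw [h2] at h1
  linarith

lemma gauss_integral_sq (v : ℝ≥0) :
    ∫ x, x ^ 2 ∂(gaussianReal 0 v) = v := by
  by_cases hv : v = 0
  · subst hv
    rw [gaussianReal_zero_var, integral_dirac]
    norm_num
  · rw [gauss_pdf_rw v hv]
    have hvpos : (0:ℝ) < v := lt_of_le_of_ne v.coe_nonneg (by exact_mod_cast (Ne.symm hv))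
    have h2v : (0:ℝ) < 2 * (v:ℝ) := by positivity
    set b : ℝ := (2 * (v:ℝ))⁻¹ with hbdef
    have hb : (0:ℝ) < b := by positivity
    have hpt : ∀ x : ℝ, gaussianPDFReal 0 v x * x ^ 2
        = (√(2 * π * (v:ℝ)))⁻¹ * (x ^ 2 * rexp (-b * x ^ 2)) := by
      intro x
      simp only [gaussianPDFReal]
      have : -b * x ^ 2 = -(x - 0) ^ 2 / (2 * v) := by
        rw [hbdef]; field_simp; ring
      rw [this]; ring
    simp_rw [hpt]
    rw [MeasureTheory.integral_const_mul]
    have habs : ∀ x : ℝ, x ^ 2 * rexp (-b * x ^ 2)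
        = |x| ^ 2 * rexp (-b * |x| ^ 2) := by
      intro x; rw [sq_abs]
    have hcomp : ∫ x : ℝ, x ^ 2 * rexp (-b * x ^ 2)
        = 2 * ∫ x in Ioi (0:ℝ), x ^ 2 * rexp (-b * x ^ 2) := by
      rw [← integral_comp_abs (f := fun t => t ^ 2 * rexp (-b * t ^ 2))]
      refine integral_congr_ae (Filter.Eventually.of_forall fun x => ?_)
      simp [sq_abs]
    rw [hcomp]
    have hIoi : ∫ x in Ioi (0:ℝ), x ^ 2 * rexp (-b * x ^ 2)
        = b ^ (-(3:ℝ)/2) * (1/2) * Real.Gamma (3/2) := by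
      have := integral_rpow_mul_exp_neg_mul_rpow (p := 2) (q := 2) (b := b)
        (by norm_num) (by norm_num) hb
      simp only [Real.rpow_two] at this
      rw [show ((2:ℝ)+1)/2 = 3/2 by norm_num, show -((2:ℝ)+1)/2 = -(3:ℝ)/2 by norm_num] at this
      rw [← this]
    rw [hIoi]
    have hGamma : Real.Gamma (3/2) = √π / 2 := by
      rw [show (3:ℝ)/2 = 1/2 + 1 by norm_num, Real.Gamma_add_one (by norm_num),
        Real.Gamma_one_half_eq]
      ring
    have hbpow : b ^ (-(3:ℝ)/2) = (2 * (v:ℝ)) * √(2 * (v:ℝ)) := by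
      rw [hbdef, ← Real.rpow_neg_one (2 * (v:ℝ)), ← Real.rpow_mul h2v.le]
      rw [show (-1:ℝ) * (-(3:ℝ)/2) = 1 + 1/2 by norm_num]
      rw [Real.rpow_add h2v, Real.rpow_one, ← Real.sqrt_eq_rpow]
    have hsqrt : √(2 * π * (v:ℝ)) = √(2 * (v:ℝ)) * √π := by
      rw [show 2 * π * (v:ℝ) = (2 * (v:ℝ)) * π by ring, Real.sqrt_mul h2v.le]
    rw [hGamma, hbpow, hsqrt]
    have h1 : √(2 * (v:ℝ)) ≠ 0 := by positivity
    have h2 : √π ≠ 0 := by positivity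
    field_simp


lemma real_self_mul_sign (t : ℝ) : t * Real.sign t = |t| := by
  rcases lt_trichotomy t 0 with h|h|h
  · rw [Real.sign_of_neg h, abs_of_neg h]; ring
  · simp [h]
  · rw [Real.sign_of_pos h, abs_of_pos h]; ring

lemma abs_sign_le_one (t : ℝ) : |Real.sign t| ≤ 1 := by
  rcases lt_trichotomy t 0 with h|h|h
  · rw [Real.sign_of_neg h]; norm_num
  · simp [h, Real.sign_zero]
  · rw [Real.sign_of_pos h]; norm_num

lemma advLossLinf_eq {d : ℕ} {r : ℝ} (hr : 0 ≤ r) (w x : Fin d → ℝ) (y : ℝ) :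
    advLossLinf r w x y = (|∑ j, w j * x j - y| + r * ∑ j, |w j|) ^ 2 := by
  set S := ∑ j, w j * x j - y with hS
  set L := ∑ j, |w j| with hL
  have hL0 : 0 ≤ L := Finset.sum_nonneg fun j _ => abs_nonneg _
  have hsum : ∀ δ : Fin d → ℝ,
      ∑ j, w j * (x j + δ j) - y = S + ∑ j, w j * δ j := by
    intro δ
    simp only [hS, mul_add, Finset.sum_add_distrib]
    ring
  have hub : ∀ e ∈ {e : ℝ | ∃ δ : Fin d → ℝ, (∀ j, |δ j| ≤ r) ∧
      e = (∑ j, w j * (x j + δ j) - y) ^ 2}, e ≤ (|S| + r * L) ^ 2 := by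
    rintro e ⟨δ, hδ, rfl⟩
    rw [hsum δ]
    have h1 : |S + ∑ j, w j * δ j| ≤ |S| + r * L := by
      refine (abs_add_le _ _).trans (add_le_add le_rfl ?_)
      refine (Finset.abs_sum_le_sum_abs _ _).trans ?_
      rw [hL, Finset.mul_sum]
      refine Finset.sum_le_sum fun j _ => ?_
      rw [abs_mul, mul_comm r]
      exact mul_le_mul_of_nonneg_left (hδ j) (abs_nonneg _)
    calc (S + ∑ j, w j * δ j) ^ 2 = |S + ∑ j, w j * δ j| ^ 2 := (sq_abs _).symm
      _ ≤ (|S| + r * L) ^ 2 := by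
          exact pow_le_pow_left₀ (abs_nonneg _) h1 2
  have hmem : (|S| + r * L) ^ 2 ∈ {e : ℝ | ∃ δ : Fin d → ℝ, (∀ j, |δ j| ≤ r) ∧
      e = (∑ j, w j * (x j + δ j) - y) ^ 2} := by
    set e : ℝ := if 0 ≤ S then (1:ℝ) else -1 with he
    have he1 : |e| = 1 := by
      rw [he]; split <;> norm_num
    refine ⟨fun j => e * (r * Real.sign (w j)), fun j => ?_, ?_⟩
    · rw [abs_mul, he1, one_mul, abs_mul, abs_of_nonneg hr]
      calc r * |Real.sign (w j)| ≤ r * 1 :=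
            mul_le_mul_of_nonneg_left (abs_sign_le_one _) hr
        _ = r := mul_one r
    · rw [hsum]
      have h2 : ∑ j, w j * (e * (r * Real.sign (w j))) = e * (r * L) := by
        calc ∑ j, w j * (e * (r * Real.sign (w j)))
            = ∑ j, e * (r * (w j * Real.sign (w j))) :=
              Finset.sum_congr rfl (fun j _ => by ring)
          _ = ∑ j, e * (r * |w j|) := by simp_rw [real_self_mul_sign]
          _ = e * (r * L) := by rw [hL, Finset.mul_sum, Finset.mul_sum]
      rw [h2, he]
      split_ifs with h
      · rw [abs_of_nonneg h]; ring
      · rw [abs_of_neg (lt_of_not_ge h)]; ring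
  rw [advLossLinf]
  exact le_antisymm (csSup_le ⟨_, hmem⟩ hub) (le_csSup ⟨_, hub⟩ hmem)

/-- Let `x ∼ N(0, I_d)` (characterized by: every `⟨v, x⟩` is a centered
Gaussian with variance `‖v‖₂²`), `z ∼ N(0, σ²)` independent of `x`, and
`y = ⟨w₀, x⟩ + z` where `w₀ = (1, …, 1, 0, …, 0)` has exactly `s` unit coordinates
(`1 ≤ s ≤ d`, `d ≥ 2`). Set the `ℓ∞`-attack strength `r = √(log d / s)`.
Then every `w ∈ ℝ^d` with `‖w − w₀‖₂ ≤ ε` for some `0 ≤ ε ≤ √s` satisfies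
`E(w, r) ≥ σ² + (1 − ε/√s)² · log d`. -/
theorem adversarial_risk_sparse_model_linf_lower_bound
    {d s : ℕ} (hd : 2 ≤ d) (hs1 : 1 ≤ s) (hsd : s ≤ d)
    {Ω : Type*} [MeasurableSpace Ω] (μ : Measure Ω) [IsProbabilityMeasure μ]
    (σ : ℝ) (hσ : 0 ≤ σ)
    (x : Ω → Fin d → ℝ) (z : Ω → ℝ)
    (hx : ∀ v : Fin d → ℝ,
      Measure.map (fun ω => ∑ j, v j * x ω j) μ =
        gaussianReal 0 (Real.toNNReal (∑ j, v j ^ 2)))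
    (hz : Measure.map z μ = gaussianReal 0 (Real.toNNReal (σ ^ 2)))
    (hxz : IndepFun x z μ)
    (w₀ : Fin d → ℝ) (hw₀ : ∀ j : Fin d, w₀ j = if (j : ℕ) < s then 1 else 0)
    (y : Ω → ℝ) (hy : ∀ ω, y ω = (∑ j, w₀ j * x ω j) + z ω)
    (r : ℝ) (hr : r = Real.sqrt (Real.log d / s))
    (w : Fin d → ℝ) (ε : ℝ) (hε0 : 0 ≤ ε) (hεs : ε ≤ Real.sqrt s)
    (hw : Real.sqrt (∑ j, (w j - w₀ j) ^ 2) ≤ ε) :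
    σ ^ 2 + (1 - ε / Real.sqrt s) ^ 2 * Real.log d ≤
      ∫ ω, advLossLinf r w (x ω) (y ω) ∂μ := by
  classical
  set u : Fin d → ℝ := fun j => w j - w₀ j with hu
  set X : Ω → ℝ := fun ω => ∑ j, u j * x ω j with hX
  set A : Ω → ℝ := fun ω => X ω - z ω with hA
  set c : ℝ := r * ∑ j, |w j| with hc
  have hr0 : 0 ≤ r := hr ▸ Real.sqrt_nonneg _
  have hc0 : 0 ≤ c := mul_nonneg hr0 (Finset.sum_nonneg fun j _ => abs_nonneg _)
  -- pointwise identity for the adversarial loss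
  have hAy : ∀ ω, ∑ j, w j * x ω j - y ω = A ω := by
    intro ω
    rw [hy ω, hA]
    simp only [hX, hu, sub_mul, Finset.sum_sub_distrib]
    ring
  have hloss : ∀ ω, advLossLinf r w (x ω) (y ω) = (|A ω| + c) ^ 2 := by
    intro ω
    rw [advLossLinf_eq hr0, hAy ω, hc]
  -- measurability and moments
  have hXae : AEMeasurable X μ := by
    by_contra h
    have h2 := hx u
    rw [Measure.map_of_not_aemeasurable h] at h2
    exact (IsProbabilityMeasure.ne_zero (gaussianReal 0 _)) h2.symm
  have hzae : AEMeasurable z μ := by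
    by_contra h
    rw [Measure.map_of_not_aemeasurable h] at hz
    exact (IsProbabilityMeasure.ne_zero (gaussianReal 0 _)) hz.symm
  have hXmem : MemLp X 2 μ := by
    have h1 : MemLp id 2 (Measure.map X μ) := by
      rw [hx u]; exact gauss_memLp2 _
    exact (memLp_map_measure_iff aestronglyMeasurable_id hXae).mp h1
  have hzmem : MemLp z 2 μ := by
    have h1 : MemLp id 2 (Measure.map z μ) := by
      rw [hz]; exact gauss_memLp2 _
    exact (memLp_map_measure_iff aestronglyMeasurable_id hzae).mp h1
  have hAmem : MemLp A 2 μ := hXmem.sub hzmem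
  have hA2int : Integrable (fun ω => A ω ^ 2) μ :=
    (memLp_two_iff_integrable_sq hAmem.aestronglyMeasurable).mp hAmem
  have hX2int : Integrable (fun ω => X ω ^ 2) μ :=
    (memLp_two_iff_integrable_sq hXmem.aestronglyMeasurable).mp hXmem
  have hz2int : Integrable (fun ω => z ω ^ 2) μ :=
    (memLp_two_iff_integrable_sq hzmem.aestronglyMeasurable).mp hzmem
  have hXint : Integrable X μ := hXmem.integrable one_le_two
  have hzint : Integrable z μ := hzmem.integrable one_le_two
  have hAint : Integrable A μ := hAmem.integrable one_le_two
  -- independence of X and z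
  have hφ : Measurable (fun v : Fin d → ℝ => ∑ j, u j * v j) :=
    Finset.measurable_sum _ (fun j _ => by fun_prop)
  have hXz : IndepFun X z μ := hxz.comp hφ measurable_id
  have hXzint : Integrable (fun ω => X ω * z ω) μ := hXz.integrable_mul hXint hzint
  -- the cross term vanishes
  have hz0 : ∫ ω, z ω ∂μ = 0 := by
    have h := MeasureTheory.integral_map (μ := μ) (φ := z) (f := fun t : ℝ => t)
      hzae measurable_id.aestronglyMeasurable
    rw [hz, gauss_integral_id] at h
    exact h.symm
  have hzero : ∫ ω, X ω * z ω ∂μ = 0 := by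
    have h := hXz.integral_mul_eq_mul_integral hXint.aestronglyMeasurable hzint.aestronglyMeasurable
    have h' : ∫ ω, X ω * z ω ∂μ = (∫ ω, X ω ∂μ) * ∫ ω, z ω ∂μ := h
    rw [h', hz0, mul_zero]
  have hzsq : ∫ ω, z ω ^ 2 ∂μ = σ ^ 2 := by
    have h := MeasureTheory.integral_map (μ := μ) (φ := z) (f := fun t : ℝ => t ^ 2)
      hzae (measurable_id.pow_const 2).aestronglyMeasurable
    rw [hz, gauss_integral_sq] at h
    rw [← h]
    exact Real.coe_toNNReal _ (sq_nonneg σ)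
  -- second moment of A
  have hAsq : ∀ ω, A ω ^ 2 = X ω ^ 2 - 2 * (X ω * z ω) + z ω ^ 2 := by
    intro ω; simp only [hA]; ring
  have hiA : σ ^ 2 ≤ ∫ ω, A ω ^ 2 ∂μ := by
    have heq : ∫ ω, A ω ^ 2 ∂μ
        = (∫ ω, X ω ^ 2 ∂μ - 2 * ∫ ω, X ω * z ω ∂μ) + ∫ ω, z ω ^ 2 ∂μ := by
      simp_rw [hAsq]
      have hint1 : Integrable (fun ω => X ω ^ 2 - 2 * (X ω * z ω)) μ := by
        exact hX2int.sub (hXzint.const_mul 2)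
      rw [integral_add hint1 hz2int, integral_sub hX2int (hXzint.const_mul 2),
        MeasureTheory.integral_const_mul]
    rw [heq, hzero, hzsq]
    have hX2nn : 0 ≤ ∫ ω, X ω ^ 2 ∂μ := integral_nonneg fun ω => sq_nonneg _
    linarith
  -- integral lower bound via pointwise bound
  have hint_adv : Integrable (fun ω => advLossLinf r w (x ω) (y ω)) μ := by
    have heq : (fun ω => advLossLinf r w (x ω) (y ω))
        = fun ω => A ω ^ 2 + (2 * c) * |A ω| + c ^ 2 := by
      funext ω
      rw [hloss ω, add_sq, sq_abs]
      ring
    rw [heq]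
    exact (hA2int.add ((hAint.abs).const_mul (2 * c))).add (integrable_const _)
  have hge : ∫ ω, (A ω ^ 2 + c ^ 2) ∂μ ≤ ∫ ω, advLossLinf r w (x ω) (y ω) ∂μ := by
    refine integral_mono (hA2int.add (integrable_const _)) hint_adv fun ω => ?_
    rw [hloss ω]
    nlinarith [abs_nonneg (A ω), sq_abs (A ω), hc0]
  rw [integral_add hA2int (integrable_const _), integral_const, probReal_univ,
    one_smul] at hge
  -- arithmetic: lower bound on c
  have hs0 : (0:ℝ) < (s:ℕ) := by exact_mod_cast hs1
  have hsqs : (1:ℝ) ≤ Real.sqrt s := by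
    rw [show (1:ℝ) = Real.sqrt 1 by simp]
    exact Real.sqrt_le_sqrt (by exact_mod_cast hs1)
  have hsqs0 : (0:ℝ) < Real.sqrt s := lt_of_lt_of_le one_pos hsqs
  have hlog0 : 0 ≤ Real.log d :=
    Real.log_nonneg (by exact_mod_cast le_trans one_le_two hd)
  -- ℓ¹ norm lower bound
  have hw₀sq : ∑ j, w₀ j ^ 2 = (s:ℝ) := by
    have hpt : ∀ j : Fin d, w₀ j ^ 2 = if (j:ℕ) < s then (1:ℝ) else 0 := by
      intro j; rw [hw₀ j]; split_ifs <;> norm_num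
    simp_rw [hpt]
    rw [Fin.sum_univ_eq_sum_range (fun i => if i < s then (1:ℝ) else 0) d,
      ← Finset.sum_filter]
    have hfil : (Finset.range d).filter (fun i => i < s) = Finset.range s := by
      ext i
      simp only [Finset.mem_filter, Finset.mem_range]
      omega
    rw [hfil, Finset.sum_const, Finset.card_range]
    simp
  have hu2 : ∑ j, u j ^ 2 ≤ ε ^ 2 := by
    have h0 : 0 ≤ ∑ j, u j ^ 2 := Finset.sum_nonneg fun j _ => sq_nonneg _
    have hw' : Real.sqrt (∑ j, u j ^ 2) ≤ ε := by simp only [hu]; exact hw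
    have := pow_le_pow_left₀ (Real.sqrt_nonneg _) hw' 2
    rwa [Real.sq_sqrt h0] at this
  have hCS : (∑ j, w₀ j * u j) ^ 2 ≤ ((Real.sqrt s) * ε) ^ 2 := by
    rw [mul_pow, Real.sq_sqrt (Nat.cast_nonneg s)]
    calc (∑ j, w₀ j * u j) ^ 2 ≤ (∑ j, w₀ j ^ 2) * (∑ j, u j ^ 2) :=
          Finset.sum_mul_sq_le_sq_mul_sq _ _ _
      _ ≤ (s:ℝ) * ε ^ 2 := by
          rw [hw₀sq]
          exact mul_le_mul_of_nonneg_left hu2 (Nat.cast_nonneg s)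
  have habs : |∑ j, w₀ j * u j| ≤ Real.sqrt s * ε := by
    rw [← Real.sqrt_sq (abs_nonneg _), ← Real.sqrt_sq (mul_nonneg hsqs0.le hε0), sq_abs]
    exact Real.sqrt_le_sqrt hCS
  have hdot : (s:ℝ) - Real.sqrt s * ε ≤ ∑ j, |w j| := by
    have hsplit : ∑ j, w₀ j * w j = ∑ j, w₀ j ^ 2 + ∑ j, w₀ j * u j := by
      rw [← Finset.sum_add_distrib]
      refine Finset.sum_congr rfl fun j _ => ?_
      simp only [hu]; ring
    have hle : ∑ j, w₀ j * w j ≤ ∑ j, |w j| := by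
      refine Finset.sum_le_sum fun j _ => ?_
      rw [hw₀ j]
      split_ifs
      · rw [one_mul]; exact le_abs_self _
      · rw [zero_mul]; exact abs_nonneg _
    have := neg_abs_le (∑ j, w₀ j * u j)
    rw [hsplit, hw₀sq] at hle
    linarith
  have hrsq : r * Real.sqrt s = Real.sqrt (Real.log d) := by
    rw [hr, ← Real.sqrt_mul (div_nonneg hlog0 (Nat.cast_nonneg s)),
      div_mul_cancel₀ _ (ne_of_gt hs0)]
  have hfac : (s:ℝ) - Real.sqrt s * ε = Real.sqrt s * (Real.sqrt s - ε) := by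
    rw [mul_sub, Real.mul_self_sqrt (Nat.cast_nonneg s)]
  have hcge : Real.sqrt (Real.log d) * (Real.sqrt s - ε) ≤ c := by
    calc Real.sqrt (Real.log d) * (Real.sqrt s - ε)
        = r * ((s:ℝ) - Real.sqrt s * ε) := by rw [hfac, ← hrsq]; ring
      _ ≤ r * ∑ j, |w j| := mul_le_mul_of_nonneg_left hdot hr0
      _ = c := hc.symm
  have hsε : 0 ≤ Real.sqrt s - ε := by linarith
  have hlhs0 : 0 ≤ Real.sqrt (Real.log d) * (Real.sqrt s - ε) :=
    mul_nonneg (Real.sqrt_nonneg _) hsε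
  have hcsq : Real.log d * (Real.sqrt s - ε) ^ 2 ≤ c ^ 2 := by
    have := pow_le_pow_left₀ hlhs0 hcge 2
    rwa [mul_pow, Real.sq_sqrt hlog0] at this
  have hone : (1 - ε / Real.sqrt s) ≤ Real.sqrt s - ε := by
    have h1 : 1 - ε / Real.sqrt s = (Real.sqrt s - ε) / Real.sqrt s := by
      field_simp
    rw [h1]
    exact div_le_self hsε hsqs
  have hone0 : 0 ≤ 1 - ε / Real.sqrt s := by
    rw [sub_nonneg, div_le_one hsqs0]
    exact hεs
  have hfinal : (1 - ε / Real.sqrt s) ^ 2 * Real.log d ≤ c ^ 2 := by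
    calc (1 - ε / Real.sqrt s) ^ 2 * Real.log d
        ≤ (Real.sqrt s - ε) ^ 2 * Real.log d :=
          mul_le_mul_of_nonneg_right (pow_le_pow_left₀ hone0 hone 2) hlog0
      _ = Real.log d * (Real.sqrt s - ε) ^ 2 := by ring
      _ ≤ c ^ 2 := hcsq
  linarith
end

section
/- Let (x_1, y_1), …, (x_n, y_n) ∈ ℝ^d × ℝ, w ∈ ℝ^d and s ≥ 0. Then the empirical adversarial risk under Euclidean-norm attacks satisfies the exact identity (1/n) Σ_{i=1}^n sup_{‖δ‖₂ ≤ s} (⟨w, x_i + δ⟩ − y_i)² = (1/n) Σ_{i=1}^n (|⟨w, x_i⟩ − y_i| + s‖w‖₂)². -/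
/-!
By Cauchy–Schwarz, `⟪w, δ⟫` ranges over `[-s‖w‖, s‖w‖]` on the ball `‖δ‖ ≤ s`, and the endpoint
carrying the sign of `a = ⟪w, x⟫ - y` is attained at `δ = ± s ‖w‖⁻¹ • w`. Hence each supremum is a
maximum, equal to `(|a| + s‖w‖)²`. In coordinates this is read in `EuclideanSpace ℝ (Fin d)`,
where the square-root sums are norms and the dot products are inner products.
-/

open Finset RealInnerProductSpace

section InnerProductSpace

variable {E : Type*} [NormedAddCommGroup E] [InnerProductSpace ℝ E]

theorem abs_add_inner_le_of_norm_le (w : E) (a : ℝ) {s : ℝ} {δ : E} (hδ : ‖δ‖ ≤ s) :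
    |a + ⟪w, δ⟫| ≤ |a| + s * ‖w‖ :=
  calc |a + ⟪w, δ⟫| ≤ |a| + |⟪w, δ⟫| := abs_add_le _ _
    _ ≤ |a| + ‖w‖ * ‖δ‖ := by gcongr; exact abs_real_inner_le_norm w δ
    _ ≤ |a| + s * ‖w‖ := by rw [mul_comm]; gcongr

theorem exists_norm_le_abs_add_inner_eq (w : E) (a : ℝ) {s : ℝ} (hs : 0 ≤ s) :
    ∃ δ : E, ‖δ‖ ≤ s ∧ |a + ⟪w, δ⟫| = |a| + s * ‖w‖ := by
  set σ : ℝ := if 0 ≤ a then 1 else -1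
  have hσ : |σ| = 1 ∧ σ * a = |a| := by
    rcases le_or_gt 0 a with h | h
    · simp [σ, h, abs_of_nonneg h]
    · simp [σ, h.not_ge, abs_of_neg h]
  refine ⟨(σ * s * ‖w‖⁻¹) • w, ?_, ?_⟩
  · rcases eq_or_ne ‖w‖ 0 with hw | hw
    · simpa [norm_eq_zero.mp hw] using hs
    · rw [norm_smul, Real.norm_eq_abs, abs_mul, abs_mul, hσ.1, abs_inv, abs_norm,
        abs_of_nonneg hs, one_mul, inv_mul_cancel_right₀ hw]
  · have hinner : ⟪w, (σ * s * ‖w‖⁻¹) • w⟫ = σ * (s * ‖w‖) := by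
      rw [real_inner_smul_right, real_inner_self_eq_norm_sq]
      rcases eq_or_ne ‖w‖ 0 with hw | hw
      · simp [hw]
      · field_simp
    have hσσ : σ * σ = 1 := by rw [← abs_mul_abs_self, hσ.1, one_mul]
    have : a + σ * (s * ‖w‖) = σ * (|a| + s * ‖w‖) := by
      rw [← hσ.2]; linear_combination (-a) * hσσ
    rw [hinner, this, abs_mul, hσ.1, one_mul, abs_of_nonneg (by positivity)]

theorem isGreatest_sq_add_inner (w : E) (a : ℝ) {s : ℝ} (hs : 0 ≤ s) :
    IsGreatest {e : ℝ | ∃ δ : E, ‖δ‖ ≤ s ∧ e = (a + ⟪w, δ⟫) ^ 2} ((|a| + s * ‖w‖) ^ 2) := by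
  constructor
  · obtain ⟨δ, hδ, heq⟩ := exists_norm_le_abs_add_inner_eq w a hs
    exact ⟨δ, hδ, by rw [← heq, sq_abs]⟩
  · rintro e ⟨δ, hδ, rfl⟩
    rw [← sq_abs]
    exact pow_le_pow_left₀ (abs_nonneg _) (abs_add_inner_le_of_norm_le w a hδ) 2

end InnerProductSpace

section EuclideanCoordinates

variable {ι : Type*} [Fintype ι]

theorem sum_mul_eq_inner_toLp (u v : ι → ℝ) :
    ∑ j, u j * v j = ⟪WithLp.toLp 2 u, WithLp.toLp 2 v⟫ := by
  simp [PiLp.inner_apply, mul_comm]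

theorem sqrt_sum_sq_eq_norm_toLp (v : ι → ℝ) :
    Real.sqrt (∑ j, v j ^ 2) = ‖WithLp.toLp 2 v‖ := by
  simp [EuclideanSpace.norm_eq]

theorem sSup_sq_sum_mul_add_sub (w x : ι → ℝ) (y : ℝ) {s : ℝ} (hs : 0 ≤ s) :
    sSup {e : ℝ | ∃ δ : ι → ℝ,
        Real.sqrt (∑ j, δ j ^ 2) ≤ s ∧ e = (∑ j, w j * (x j + δ j) - y) ^ 2} =
      (|∑ j, w j * x j - y| + s * Real.sqrt (∑ j, w j ^ 2)) ^ 2 := by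
  have hset : {e : ℝ | ∃ δ : ι → ℝ,
        Real.sqrt (∑ j, δ j ^ 2) ≤ s ∧ e = (∑ j, w j * (x j + δ j) - y) ^ 2} =
      {e : ℝ | ∃ δ : EuclideanSpace ℝ ι, ‖δ‖ ≤ s ∧
        e = ((∑ j, w j * x j - y) + ⟪WithLp.toLp 2 w, δ⟫) ^ 2} := by
    ext e
    simp only [Set.mem_ofPred_eq]
    refine ((WithLp.equiv 2 (ι → ℝ)).exists_congr_left.trans (exists_congr fun v => ?_)).symm
    have hsplit : ∑ j, w j * (x j + v j) - y = (∑ j, w j * x j - y) + ∑ j, w j * v j := by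
      rw [← add_sub_right_comm, ← sum_add_distrib]
      simp only [mul_add]
    rw [WithLp.equiv_symm_apply, hsplit, sqrt_sum_sq_eq_norm_toLp, sum_mul_eq_inner_toLp w v]
  rw [hset, sqrt_sum_sq_eq_norm_toLp]
  exact (isGreatest_sq_add_inner _ _ hs).csSup_eq

end EuclideanCoordinates

theorem empirical_adversarial_risk_eq_general
    {n d : ℕ} (x : Fin n → Fin d → ℝ) (y : Fin n → ℝ)
    (w : Fin d → ℝ) (s : ℝ) (hs : 0 ≤ s) :
    (1 / (n : ℝ)) * ∑ i, sSup {e : ℝ | ∃ δ : Fin d → ℝ,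
        Real.sqrt (∑ j, δ j ^ 2) ≤ s ∧ e = (∑ j, w j * (x i j + δ j) - y i) ^ 2} =
      (1 / (n : ℝ)) * ∑ i,
        (|∑ j, w j * x i j - y i| + s * Real.sqrt (∑ j, w j ^ 2)) ^ 2 := by
  simp only [sSup_sq_sum_mul_add_sub w (x _) (y _) hs]

/-- For a finite dataset `(x_1, y_1), …, (x_n, y_n)`, `w ∈ ℝ^d` and
`s ≥ 0`, the empirical adversarial risk under Euclidean-norm attacks satisfies the exact
identity
`(1/n) ∑ᵢ sup_{‖δ‖₂ ≤ s} (⟨w, xᵢ + δ⟩ − yᵢ)² = (1/n) ∑ᵢ (|⟨w, xᵢ⟩ − yᵢ| + s‖w‖₂)²`. -/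
theorem empirical_adversarial_risk_eq
    {n d : ℕ} (hn : 0 < n) (x : Fin n → Fin d → ℝ) (y : Fin n → ℝ)
    (w : Fin d → ℝ) (s : ℝ) (hs : 0 ≤ s) :
    (1 / (n : ℝ)) * ∑ i, sSup {e : ℝ | ∃ δ : Fin d → ℝ,
        Real.sqrt (∑ j, δ j ^ 2) ≤ s ∧ e = (∑ j, w j * (x i j + δ j) - y i) ^ 2} =
      (1 / (n : ℝ)) * ∑ i,
        (|∑ j, w j * x i j - y i| + s * Real.sqrt (∑ j, w j ^ 2)) ^ 2 :=
  empirical_adversarial_risk_eq_general x y w s hs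
end
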